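/- arXiv:1707.05077 — 9 statements merged into one kernel-verified Lean document; each statement's English description precedes it below -/
import Mathlib

section
/- Let k and s be natural numbers with 1 ≤ s ≤ k, and let λ > 1 be a real number. Suppose g_1, …, g_k : ℝ_{≥0} → ℝ are 1-Lipschitz functions with g_r(0) = 0 for every r. If for every real x ≥ 1 there are at least s indices r such that both x and -x are visited by g_r within time λx (i.e., there exist t_1, t_2 ∈ [0, λx] with g_r(t_1) = x and g_r(t_2) = -x), then λ ≥ 2·((k+s)^{k+s}/(s^s · k^k))^{1/k} + 1. -/
/-!
Write `λ = 1 + 2c` and suppose `c < ρ := ((k+s)^(k+s) / (s^s k^k))^(1/k)`; pick `q > 1` with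
`q² c = ρ` and look at the levels `q^n`, `0 ≤ n ≤ N`.

The levels a single robot covers are grouped into blocks `[β, γ]`: on its late side `σ` of level `β`
the robot has, by then, already been out to `-σ q^γ`, and `γ` is the highest such level. Going
out to `±q^γ` and back costs `2 q^γ` of travel, so reaching level `β` on its late side takes at
least `q^β + 2 A`, where `A` is the sum of the turning points `q^γ` of this and all earlier blocks;
covering within time `(1 + 2c) q^β` forces `A ≤ c q^β`. Weighted AM-GM,
`ρ^k x^k y^s ≤ (x + y)^(k+s)` with `x = q^γ` and `y` the earlier turning points, then shows that
each block multiplies `A^s` by at least `q^(k (γ - β + 2))`; hence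
`k (#covered levels + #blocks) ≤ s N + O(1)` for every robot, while each block spans `O(1)` levels.
Summed over the `k` robots, this contradicts the `s`-fold covering of the `N + 1` levels once `N`
is large.
-/

open scoped NNReal
open Set Finset

/-- Junk value `0` if `f` never reaches `v`. -/
noncomputable def hitTime (f : ℝ≥0 → ℝ) (v : ℝ) : ℝ≥0 := sInf (f ⁻¹' {v})

section hitTime

variable {f : ℝ≥0 → ℝ} {u v : ℝ}

theorem hitTime_le {t : ℝ≥0} (h : f t = v) : hitTime f v ≤ t :=
  csInf_le (OrderBot.bddBelow _) h

theorem apply_hitTime (hf : Continuous f) (hv : v ∈ range f) : f (hitTime f v) = v :=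
  (isClosed_singleton.preimage hf).csInf_mem hv (OrderBot.bddBelow _)

theorem hitTime_zero (h0 : f 0 = 0) : hitTime f 0 = 0 := nonpos_iff_eq_zero.1 (hitTime_le h0)

theorem hitTime_add_abs_sub_le (hf : LipschitzWith 1 f) (hu : u ∈ range f) (hv : v ∈ range f)
    (huv : hitTime f u ≤ hitTime f v) : (hitTime f u : ℝ) + |v - u| ≤ hitTime f v := by
  have h := hf.dist_le_mul (hitTime f v) (hitTime f u)
  rw [apply_hitTime hf.continuous hu, apply_hitTime hf.continuous hv, Real.dist_eq,
    NNReal.dist_eq, abs_of_nonneg (sub_nonneg.2 (NNReal.coe_le_coe.2 huv)), NNReal.coe_one,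
    one_mul] at h
  linarith

theorem hitTime_add_le {σ d : ℝ} (hf : LipschitzWith 1 f) (hu : u ∈ range f)
    (hv : v ∈ range f) (huv : hitTime f u ≤ hitTime f v) (hσ : |σ| = 1) (hd : v - u = σ * d)
    (hd0 : 0 ≤ d) : (hitTime f u : ℝ) + d ≤ hitTime f v := by
  simpa [hd, abs_mul, hσ, abs_of_nonneg hd0] using hitTime_add_abs_sub_le hf hu hv huv

theorem abs_le_hitTime (hf : LipschitzWith 1 f) (h0 : f 0 = 0) (hv : v ∈ range f) :
    |v| ≤ hitTime f v := by
  simpa [hitTime_zero h0] using hitTime_add_abs_sub_le hf ⟨0, h0⟩ hv (by simp [hitTime_zero h0])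

theorem hitTime_le_hitTime (hf : Continuous f) (h0 : f 0 = 0) (hv : v ∈ range f)
    (hu : u ∈ uIcc 0 v) : hitTime f u ≤ hitTime f v := by
  rw [← h0, ← apply_hitTime hf hv] at hu
  obtain ⟨t, ht, rfl⟩ := intermediate_value_uIcc hf.continuousOn hu
  rw [Set.uIcc_of_le zero_le] at ht
  exact (hitTime_le rfl).trans ht.2

end hitTime

/-- The paper's "`f` λ-covers `x`". -/
def SymmCovers (lam : ℝ) (f : ℝ≥0 → ℝ) (x : ℝ) : Prop :=
  ∃ t₁ t₂ : ℝ≥0, (t₁ : ℝ) ≤ lam * x ∧ (t₂ : ℝ) ≤ lam * x ∧ f t₁ = x ∧ f t₂ = -x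

section SymmCovers

variable {f : ℝ≥0 → ℝ} {lam x σ : ℝ}

theorem SymmCovers.mem_range (h : SymmCovers lam f x) (hσ : |σ| = 1) : σ * x ∈ range f := by
  obtain ⟨t₁, t₂, -, -, h₁, h₂⟩ := h
  rcases (abs_eq zero_le_one).1 hσ with rfl | rfl
  exacts [⟨t₁, by simpa⟩, ⟨t₂, by simpa⟩]

theorem SymmCovers.hitTime_le (h : SymmCovers lam f x) (hσ : |σ| = 1) :
    (hitTime f (σ * x) : ℝ) ≤ lam * x := by
  obtain ⟨t₁, t₂, ht₁, ht₂, h₁, h₂⟩ := h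
  rcases (abs_eq zero_le_one).1 hσ with rfl | rfl
  · exact (NNReal.coe_le_coe.2 (hitTime_le (by simpa using h₁))).trans ht₁
  · exact (NNReal.coe_le_coe.2 (hitTime_le (by simpa using h₂))).trans ht₂

end SymmCovers

def turnSum (q : ℝ) (l : List (ℕ × ℕ)) : ℝ := (l.map fun b => q ^ b.2).sum

theorem turnSum_cons (q : ℝ) (b : ℕ × ℕ) (l : List (ℕ × ℕ)) :
    turnSum q (b :: l) = q ^ b.2 + turnSum q l := List.sum_cons

def Capped (q c : ℝ) : List (ℕ × ℕ) → Prop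
  | [] => True
  | b :: l => turnSum q (b :: l) ≤ c * q ^ b.1 ∧ Capped q c l

def width (b : ℕ × ℕ) : ℕ := b.2 + 1 - b.1

/-- Blocks `(β, γ)` are listed latest first. The latest one was closed on a side `σ`: the robot
reaches `-σ q^γ` no later than `σ q^β`, `γ` is the highest level of `C` with this property, and
by the time it reaches `-σ q^γ` it has travelled out to, and back from, all earlier turning
points. -/
def HeadInv (f : ℝ≥0 → ℝ) (q : ℝ) (C : Finset ℕ) : List (ℕ × ℕ) → Prop
  | [] => True
  | b :: l => ∃ σ : ℝ, |σ| = 1 ∧ hitTime f (-σ * q ^ b.2) ≤ hitTime f (σ * q ^ b.1) ∧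
      2 * turnSum q l + q ^ b.2 ≤ hitTime f (-σ * q ^ b.2) ∧
      ∀ m ∈ C, hitTime f (-σ * q ^ m) ≤ hitTime f (σ * q ^ b.1) → m ≤ b.2

structure IsBlockCover (f : ℝ≥0 → ℝ) (q c : ℝ) (C : Finset ℕ) (n : ℕ) (l : List (ℕ × ℕ)) :
    Prop where
  capped : Capped q c l
  mem : ∀ b ∈ l, b.1 ∈ C ∧ b.2 ∈ C ∧ b.1 ≤ b.2 ∧ b.1 < n
  covers : ∀ m ∈ C, m < n → ∃ b ∈ l, b.1 ≤ m ∧ m ≤ b.2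
  head : HeadInv f q C l

section Blocks

variable {f : ℝ≥0 → ℝ} {q c : ℝ} {C : Finset ℕ} {n : ℕ} {l : List (ℕ × ℕ)}

theorem IsBlockCover.two_mul_turnSum_add_le_hitTime (hf : LipschitzWith 1 f) (h0 : f 0 = 0)
    (hq : 1 ≤ q) (hC : ∀ m ∈ C, SymmCovers (1 + 2 * c) f (q ^ m))
    (hl : IsBlockCover f q c C n l) {γ : ℕ} (hγ : γ ∈ C) (htop : ∀ b ∈ l.head?, b.2 < γ)
    {σ : ℝ} (hσ : |σ| = 1) : 2 * turnSum q l + q ^ γ ≤ hitTime f (σ * q ^ γ) := by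
  have hq0 : 0 < q := zero_lt_one.trans_le hq
  have reach {m : ℕ} (hm : m ∈ C) {ε : ℝ} (hε : |ε| = 1) : ε * q ^ m ∈ range f :=
    (hC m hm).mem_range hε
  cases l with
  | nil =>
    simpa [turnSum, abs_mul, hσ, abs_of_pos hq0] using abs_le_hitTime hf h0 (reach hγ hσ)
  | cons b l =>
    obtain ⟨τ, hτ, hlate, hbound, hmax⟩ := hl.head
    obtain ⟨hβC, hb₂C, hβb₂, -⟩ := hl.mem b List.mem_cons_self
    have hb₂γ : b.2 < γ := htop b rfl
    have hτ' : |-τ| = 1 := (abs_neg τ).trans hτ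
    have hfar := hitTime_add_le hf (reach hb₂C hτ') (reach hβC hτ) hlate hτ (by ring)
      (by positivity : 0 ≤ q ^ b.2 + q ^ b.1)
    rw [turnSum_cons]
    rcases abs_eq_abs.1 (hσ.trans hτ.symm) with rfl | rfl
    · have hβγ : σ * q ^ b.1 ∈ uIcc 0 (σ * q ^ γ) := by
        rw [← mul_zero σ, ← image_const_mul_uIcc]
        exact mem_image_of_mem _ (mem_uIcc_of_le (by positivity)
          (pow_le_pow_right₀ hq (hβb₂.trans hb₂γ.le)))
      have hmono := hitTime_le_hitTime hf.continuous h0 (reach hγ hσ) hβγ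
      have := hitTime_add_le hf (reach hb₂C hτ') (reach hγ hσ) (hlate.trans hmono) hσ (by ring)
        (by positivity : 0 ≤ q ^ b.2 + q ^ γ)
      linarith
    · have hlt : hitTime f (τ * q ^ b.1) ≤ hitTime f (-τ * q ^ γ) :=
        le_of_not_ge fun h => hb₂γ.not_ge (hmax γ hγ h)
      have := hitTime_add_le hf (reach hβC hτ) (reach hγ hτ') hlt hτ' (by ring)
        (by positivity : 0 ≤ q ^ b.1 + q ^ γ)
      linarith [pow_pos hq0 b.1]

theorem IsBlockCover.exists_cons (hf : LipschitzWith 1 f) (h0 : f 0 = 0) (hq : 1 ≤ q)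
    (hC : ∀ m ∈ C, SymmCovers (1 + 2 * c) f (q ^ m)) (hl : IsBlockCover f q c C n l)
    (hn : n ∈ C) (htop : ∀ b ∈ l.head?, b.2 < n) {σ : ℝ} (hσ : |σ| = 1)
    (hlate : hitTime f (-σ * q ^ n) ≤ hitTime f (σ * q ^ n)) :
    ∃ γ, IsBlockCover f q c C (n + 1) ((n, γ) :: l) := by
  classical
  set S := C.filter fun m => hitTime f (-σ * q ^ m) ≤ hitTime f (σ * q ^ n)
  have hnS : n ∈ S := mem_filter.2 ⟨hn, hlate⟩
  obtain ⟨hγC, hγlate⟩ := mem_filter.1 (S.max'_mem ⟨n, hnS⟩)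
  set γ := S.max' ⟨n, hnS⟩
  have hnγ : n ≤ γ := S.le_max' n hnS
  have hσ' : |-σ| = 1 := (abs_neg σ).trans hσ
  have hbound := hl.two_mul_turnSum_add_le_hitTime hf h0 hq hC hγC
    (fun b hb => (htop b hb).trans_le hnγ) hσ'
  have hgap := hitTime_add_le hf ((hC γ hγC).mem_range hσ') ((hC n hn).mem_range hσ) hγlate hσ
    (by ring) (by positivity : 0 ≤ q ^ γ + q ^ n)
  have hlam := (hC n hn).hitTime_le hσ
  refine ⟨γ, ⟨⟨?_, hl.capped⟩, ?_, ?_, σ, hσ, hγlate, hbound,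
    fun m hm h => S.le_max' m (mem_filter.2 ⟨hm, h⟩)⟩⟩
  · rw [turnSum_cons]
    linarith
  · rintro b (_ | ⟨_, hb⟩)
    · exact ⟨hn, hγC, hnγ, n.lt_succ_self⟩
    · obtain ⟨h₁, h₂, h₃, h₄⟩ := hl.mem b hb
      exact ⟨h₁, h₂, h₃, h₄.trans n.lt_succ_self⟩
  · intro m hm hmn
    rcases Nat.lt_succ_iff_lt_or_eq.1 hmn with hmn | rfl
    · obtain ⟨b, hb, hbm⟩ := hl.covers m hm hmn
      exact ⟨b, List.mem_cons_of_mem _ hb, hbm⟩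
    · exact ⟨_, List.mem_cons_self, le_rfl, hnγ⟩

theorem IsBlockCover.succ (hl : IsBlockCover f q c C n l)
    (hn : n ∈ C → ∃ b ∈ l, b.1 ≤ n ∧ n ≤ b.2) : IsBlockCover f q c C (n + 1) l where
  capped := hl.capped
  mem b hb :=
    let ⟨h₁, h₂, h₃, h₄⟩ := hl.mem b hb
    ⟨h₁, h₂, h₃, h₄.trans n.lt_succ_self⟩
  covers m hm hmn := by
    rcases Nat.lt_succ_iff_lt_or_eq.1 hmn with hmn | rfl
    exacts [hl.covers m hm hmn, hn hm]
  head := hl.head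

theorem IsBlockCover.exists_succ (hf : LipschitzWith 1 f) (h0 : f 0 = 0) (hq : 1 ≤ q)
    (hC : ∀ m ∈ C, SymmCovers (1 + 2 * c) f (q ^ m)) (hl : IsBlockCover f q c C n l) :
    ∃ l', IsBlockCover f q c C (n + 1) l' := by
  by_cases hn : n ∈ C
  swap
  · exact ⟨l, hl.succ fun h => absurd h hn⟩
  by_cases hhead : ∃ b ∈ l.head?, n ≤ b.2
  · obtain ⟨b, hb, hnb⟩ := hhead
    have hbl := List.mem_of_mem_head? hb
    exact ⟨l, hl.succ fun _ => ⟨b, hbl, (hl.mem b hbl).2.2.2.le, hnb⟩⟩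
  push Not at hhead
  rcases le_total (hitTime f (-1 * q ^ n)) (hitTime f (1 * q ^ n)) with hlate | hlate
  · exact (hl.exists_cons hf h0 hq hC hn hhead (by simp) hlate).elim fun _ h => ⟨_, h⟩
  · exact (hl.exists_cons hf h0 hq hC hn hhead (σ := -1) (by simp) (by simpa using hlate)).elim
      fun _ h => ⟨_, h⟩

theorem exists_capped_cover (hf : LipschitzWith 1 f) (h0 : f 0 = 0) (hq : 1 ≤ q)
    (hC : ∀ m ∈ C, SymmCovers (1 + 2 * c) f (q ^ m)) :
    ∃ l : List (ℕ × ℕ), Capped q c l ∧ (∀ b ∈ l, b.1 ∈ C ∧ b.1 ≤ b.2) ∧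
      ∀ m ∈ C, ∃ b ∈ l, b.1 ≤ m ∧ m ≤ b.2 := by
  have hcover (n : ℕ) : ∃ l, IsBlockCover f q c C n l := by
    induction n with
    | zero => exact ⟨[], trivial, by simp, by simp, trivial⟩
    | succ n ih => exact ih.elim fun l hl => hl.exists_succ hf h0 hq hC
  obtain ⟨n, hn⟩ := C.exists_nat_subset_range
  obtain ⟨l, hl⟩ := hcover n
  exact ⟨l, hl.capped, fun b hb => ⟨(hl.mem b hb).1, (hl.mem b hb).2.2.1⟩,
    fun m hm => hl.covers m hm (mem_range.1 (hn hm))⟩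

end Blocks

section Capped

variable {q c : ℝ} {k s d : ℕ}

theorem turnSum_nonneg (hq : 0 ≤ q) (l : List (ℕ × ℕ)) : 0 ≤ turnSum q l :=
  List.sum_nonneg fun _ hx => by
    obtain ⟨b, -, rfl⟩ := List.mem_map.1 hx
    positivity

theorem one_le_turnSum_cons (hq : 1 ≤ q) (b : ℕ × ℕ) (l : List (ℕ × ℕ)) :
    1 ≤ turnSum q (b :: l) := by
  rw [turnSum_cons]
  linarith [one_le_pow₀ (n := b.2) hq, turnSum_nonneg (zero_le_one.trans hq) l]

theorem pow_width_add_one_mul (q : ℝ) {b : ℕ × ℕ} (hb : b.1 ≤ b.2) :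
    q ^ (width b + 1) * q ^ b.1 = q ^ 2 * q ^ b.2 := by
  rw [← pow_add, ← pow_add, width]
  congr 1
  omega

theorem Capped.pow_width_add_one_le (hq : 0 < q) {l : List (ℕ × ℕ)} (hl : Capped q c l)
    {b : ℕ × ℕ} (hb : b ∈ l) (hb' : b.1 ≤ b.2) : q ^ (width b + 1) ≤ q ^ 2 * c := by
  induction l with
  | nil => cases hb
  | cons b₀ l ih =>
    rcases List.mem_cons.1 hb with rfl | hb
    · have hcap := hl.1
      rw [turnSum_cons] at hcap
      have := turnSum_nonneg hq.le l
      refine le_of_mul_le_mul_right ?_ (pow_pos hq b.1)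
      rw [pow_width_add_one_mul q hb']
      nlinarith [pow_pos hq 2]
    · exact ih hl.2 hb

theorem Capped.width_le (hq : 1 < q) (hcd : c < q ^ d) {l : List (ℕ × ℕ)} (hl : Capped q c l)
    {b : ℕ × ℕ} (hb : b ∈ l) (hb' : b.1 ≤ b.2) : width b ≤ d := by
  have h : q ^ (width b + 1) < q ^ (d + 2) :=
    calc q ^ (width b + 1) ≤ q ^ 2 * c := hl.pow_width_add_one_le (by linarith) hb hb'
      _ < q ^ 2 * q ^ d := by gcongr
      _ = q ^ (d + 2) := by ring
  have := (pow_lt_pow_iff_right₀ hq).1 h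
  omega

theorem Capped.sum_width_le (hq : 1 < q) (hcd : c < q ^ d) {l : List (ℕ × ℕ)}
    (hl : Capped q c l) (hle : ∀ b ∈ l, b.1 ≤ b.2) : (l.map width).sum ≤ d * l.length := by
  refine (List.sum_le_card_nsmul _ d fun w hw => ?_).trans_eq (by simp [mul_comm])
  obtain ⟨b, hb, rfl⟩ := List.mem_map.1 hw
  exact hl.width_le hq hcd hb (hle b hb)

theorem card_le_sum_width {C : Finset ℕ} {l : List (ℕ × ℕ)}
    (h : ∀ m ∈ C, ∃ b ∈ l, b.1 ≤ m ∧ m ≤ b.2) : #C ≤ (l.map width).sum := by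
  induction l generalizing C with
  | nil => simp_all [Finset.eq_empty_iff_forall_notMem]
  | cons b l ih =>
    have hrest : #(C \ Icc b.1 b.2) ≤ (l.map width).sum := ih fun m hm => by
      obtain ⟨hmC, hmb⟩ := mem_sdiff.1 hm
      obtain ⟨b', hb', hb'm⟩ := h m hmC
      rcases List.mem_cons.1 hb' with rfl | hb'
      · exact absurd (Finset.mem_Icc.2 hb'm) hmb
      · exact ⟨b', hb', hb'm⟩
    calc #C ≤ #(C \ Icc b.1 b.2) + #(Icc b.1 b.2) := card_le_card_sdiff_add_card
      _ ≤ ((b :: l).map width).sum := by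
          rw [Nat.card_Icc, List.map_cons, List.sum_cons, width]
          omega

theorem pow_mul_turnSum_pow_le (hq : 0 < q) (hc : 0 < c)
    (hQ : ∀ x y : ℝ, 0 ≤ x → 0 ≤ y → (q ^ 2 * c) ^ k * (x ^ k * y ^ s) ≤ (x + y) ^ (k + s))
    {b : ℕ × ℕ} (hb : b.1 ≤ b.2) {l : List (ℕ × ℕ)} (hcap : turnSum q (b :: l) ≤ c * q ^ b.1) :
    q ^ (k * (width b + 1)) * turnSum q l ^ s ≤ turnSum q (b :: l) ^ s := by
  have hscale : c * q ^ b.1 * q ^ (width b + 1) = q ^ 2 * c * q ^ b.2 := by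
    linear_combination c * pow_width_add_one_mul q hb
  have := turnSum_nonneg hq.le (b :: l)
  refine le_of_mul_le_mul_left ?_ (by positivity : 0 < (c * q ^ b.1) ^ k)
  calc (c * q ^ b.1) ^ k * (q ^ (k * (width b + 1)) * turnSum q l ^ s)
      = (q ^ 2 * c) ^ k * ((q ^ b.2) ^ k * turnSum q l ^ s) := by
        rw [mul_comm k, pow_mul, ← mul_assoc, ← mul_pow, hscale]
        ring
    _ ≤ turnSum q (b :: l) ^ k * turnSum q (b :: l) ^ s := by
        rw [← pow_add, turnSum_cons]
        exact hQ _ _ (by positivity) (turnSum_nonneg hq.le l)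
    _ ≤ (c * q ^ b.1) ^ k * turnSum q (b :: l) ^ s := by gcongr

theorem Capped.pow_le (hq : 1 ≤ q) (hc : 0 < c)
    (hQ : ∀ x y : ℝ, 0 ≤ x → 0 ≤ y → (q ^ 2 * c) ^ k * (x ^ k * y ^ s) ≤ (x + y) ^ (k + s))
    {b : ℕ × ℕ} {l : List (ℕ × ℕ)} (hl : Capped q c (b :: l)) (hle : ∀ x ∈ b :: l, x.1 ≤ x.2) :
    q ^ (k * (((b :: l).map width).sum + (b :: l).length)) ≤
      (q ^ 2 * c) ^ k * turnSum q (b :: l) ^ s := by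
  have hq0 : 0 < q := zero_lt_one.trans_le hq
  induction l generalizing b with
  | nil =>
    have h := hl.pow_width_add_one_le hq0 List.mem_cons_self (hle b List.mem_cons_self)
    calc q ^ (k * (([b].map width).sum + [b].length)) = (q ^ (width b + 1)) ^ k := by
          simp [← pow_mul, mul_comm]
      _ ≤ (q ^ 2 * c) ^ k := by gcongr
      _ ≤ (q ^ 2 * c) ^ k * turnSum q [b] ^ s :=
          le_mul_of_one_le_right (by positivity) (one_le_pow₀ (one_le_turnSum_cons hq b []))
  | cons b' l ih =>
    have hstep := pow_mul_turnSum_pow_le hq0 hc hQ (hle b List.mem_cons_self) hl.1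
    have ih' := ih hl.2 fun x hx => hle x (List.mem_cons_of_mem b hx)
    calc q ^ (k * (((b :: b' :: l).map width).sum + (b :: b' :: l).length))
        = q ^ (k * (width b + 1)) * q ^ (k * (((b' :: l).map width).sum + (b' :: l).length)) := by
          rw [← pow_add]
          congr 1
          simp only [List.map_cons, List.sum_cons, List.length_cons]
          ring
      _ ≤ q ^ (k * (width b + 1)) * ((q ^ 2 * c) ^ k * turnSum q (b' :: l) ^ s) := by gcongr
      _ ≤ (q ^ 2 * c) ^ k * turnSum q (b :: b' :: l) ^ s := by
          rw [mul_left_comm]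
          gcongr

theorem Capped.mul_sum_width_add_length_le {N : ℕ} (hq : 1 < q) (hc : 0 < c)
    (hQ : ∀ x y : ℝ, 0 ≤ x → 0 ≤ y → (q ^ 2 * c) ^ k * (x ^ k * y ^ s) ≤ (x + y) ^ (k + s))
    (hcd : c < q ^ d) {l : List (ℕ × ℕ)} (hl : Capped q c l)
    (hle : ∀ b ∈ l, b.1 ≤ b.2 ∧ b.1 ≤ N) :
    k * ((l.map width).sum + l.length) ≤ 2 * k + d * (k + s) + s * N := by
  cases l with
  | nil => simp
  | cons b l =>
    have hA : turnSum q (b :: l) ≤ q ^ d * q ^ N := hl.1.trans <| by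
      gcongr
      exacts [hq.le, (hle b List.mem_cons_self).2]
    have := turnSum_nonneg (zero_le_one.trans hq.le) (b :: l)
    rw [← pow_le_pow_iff_right₀ hq]
    calc q ^ (k * (((b :: l).map width).sum + (b :: l).length))
        ≤ (q ^ 2 * c) ^ k * turnSum q (b :: l) ^ s :=
          hl.pow_le hq.le hc hQ fun x hx => (hle x hx).1
      _ ≤ (q ^ 2 * q ^ d) ^ k * (q ^ d * q ^ N) ^ s := by gcongr
      _ = q ^ (2 * k + d * (k + s) + s * N) := by ring

theorem exists_block_count {f : ℝ≥0 → ℝ} (hf : LipschitzWith 1 f) (h0 : f 0 = 0) {N : ℕ}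
    (hq : 1 < q) (hc : 0 < c)
    (hQ : ∀ x y : ℝ, 0 ≤ x → 0 ≤ y → (q ^ 2 * c) ^ k * (x ^ k * y ^ s) ≤ (x + y) ^ (k + s))
    (hcd : c < q ^ d) {C : Finset ℕ} (hCN : ∀ m ∈ C, m ≤ N)
    (hC : ∀ m ∈ C, SymmCovers (1 + 2 * c) f (q ^ m)) :
    ∃ S m : ℕ, #C ≤ S ∧ S ≤ d * m ∧ k * (S + m) ≤ 2 * k + d * (k + s) + s * N := by
  obtain ⟨l, hl, hmem, hcov⟩ := exists_capped_cover hf h0 hq.le hC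
  exact ⟨_, _, card_le_sum_width hcov, hl.sum_width_le hq hcd fun b hb => (hmem b hb).2,
    hl.mul_sum_width_add_length_le hq hc hQ hcd fun b hb => ⟨(hmem b hb).2, hCN _ (hmem b hb).1⟩⟩

end Capped

theorem geom_mean_le_arith_mean2_nat_weighted {k s : ℕ} (hk : 0 < k) (hs : 0 < s) {x y : ℝ}
    (hx : 0 ≤ x) (hy : 0 ≤ y) :
    ((k + s : ℕ) : ℝ) ^ (k + s) * (x ^ k * y ^ s) ≤
      (k : ℝ) ^ k * (s : ℝ) ^ s * (x + y) ^ (k + s) := by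
  set T : ℝ := ((k + s : ℕ) : ℝ) with hT
  have hk' : (0 : ℝ) < k := by exact_mod_cast hk
  have hs' : (0 : ℝ) < s := by exact_mod_cast hs
  have hT0 : 0 < T := by positivity
  have hw : (k : ℝ) / T + s / T = 1 := by
    rw [← add_div, div_eq_one_iff_eq hT0.ne', hT, Nat.cast_add]
  have hgm := Real.geom_mean_le_arith_mean2_weighted (by positivity) (by positivity)
    (div_nonneg hx hk'.le) (div_nonneg hy hs'.le) hw
  have hmean : (k : ℝ) / T * (x / k) + s / T * (y / s) = (x + y) / T := by
    field_simp
  rw [hmean] at hgm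
  have key : (x / k) ^ k * (y / s) ^ s ≤ ((x + y) / T) ^ (k + s) := by
    have h := Real.rpow_le_rpow (by positivity) hgm hT0.le
    rwa [Real.mul_rpow (by positivity) (by positivity), ← Real.rpow_mul (by positivity),
      ← Real.rpow_mul (by positivity), div_mul_cancel₀ _ hT0.ne', div_mul_cancel₀ _ hT0.ne',
      Real.rpow_natCast, Real.rpow_natCast, hT, Real.rpow_natCast] at h
  rw [div_pow, div_pow, div_pow, div_mul_div_comm,
    div_le_div_iff₀ (by positivity) (by positivity)] at key
  linarith

theorem exists_one_lt_scaled_amgm {k s : ℕ} (hk : 0 < k) (hs : 0 < s) {c : ℝ} (hc : 0 < c)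
    (hcρ : c < (((k + s : ℕ) : ℝ) ^ (k + s) / ((s : ℝ) ^ s * (k : ℝ) ^ k)) ^ ((1 : ℝ) / k)) :
    ∃ q : ℝ, 1 < q ∧
      ∀ x y : ℝ, 0 ≤ x → 0 ≤ y → (q ^ 2 * c) ^ k * (x ^ k * y ^ s) ≤ (x + y) ^ (k + s) := by
  set Q := ((k + s : ℕ) : ℝ) ^ (k + s) / ((s : ℝ) ^ s * (k : ℝ) ^ k)
  have hQ : 0 < Q := by positivity
  set ρ := Q ^ ((1 : ℝ) / k)
  have hρ : ρ ^ k = Q := by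
    rw [← Real.rpow_natCast, ← Real.rpow_mul hQ.le, one_div_mul_cancel (by positivity),
      Real.rpow_one]
  refine ⟨√(ρ / c), ?_, fun x y hx hy => ?_⟩
  · rw [Real.lt_sqrt zero_le_one, one_pow, one_lt_div hc]
    exact hcρ
  · rw [Real.sq_sqrt (by positivity), div_mul_cancel₀ _ hc.ne', hρ, div_mul_eq_mul_div,
      div_le_iff₀ (by positivity)]
    linarith [geom_mean_le_arith_mean2_nat_weighted hk hs hx hy]

theorem mul_le_sum_card_filter {ι α : Type*} [Fintype ι] (A : Finset α) (P : ι → α → Prop)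
    [∀ i a, Decidable (P i a)] {n : ℕ} (h : ∀ a ∈ A, n ≤ #{i | P i a}) :
    #A * n ≤ ∑ i, #{a ∈ A | P i a} := by
  refine (A.card_nsmul_le_sum _ _ h).trans_eq ?_
  simp_rw [card_filter]
  exact sum_comm

theorem succ_mul_sum_le {ι : Type*} [Fintype ι] {S m : ι → ℕ} {d K : ℕ}
    (hS : ∀ i, S i ≤ d * m i) (hK : ∀ i, Fintype.card ι * (S i + m i) ≤ K) :
    (d + 1) * ∑ i, S i ≤ d * K := by
  have hsum : ∑ i, (S i + m i) ≤ K := by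
    rcases (Fintype.card ι).eq_zero_or_pos with h | h
    · have := Fintype.card_eq_zero_iff.1 h
      simp
    · refine Nat.le_of_mul_le_mul_left ?_ h
      calc Fintype.card ι * ∑ i, (S i + m i) = ∑ i, Fintype.card ι * (S i + m i) := mul_sum _ _ _
        _ ≤ ∑ _i : ι, K := sum_le_sum fun i _ => hK i
        _ = Fintype.card ι * K := by simp
  calc (d + 1) * ∑ i, S i = d * ∑ i, S i + ∑ i, S i := by ring
    _ ≤ d * ∑ i, S i + ∑ i, d * m i := by
        gcongr with i
        exact hS i
    _ = d * ∑ i, (S i + m i) := by rw [sum_add_distrib, mul_add, mul_sum univ m]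
    _ ≤ d * K := by gcongr

/-- Lower bound for `s`-fold symmetric line covering: if `k` robot trajectories
(1-Lipschitz, starting at 0) are such that every `x ≥ 1` has both `x` and `-x`
visited within time `λx` by at least `s` of them, then
`λ ≥ 2 ((k+s)^(k+s)/(s^s k^k))^(1/k) + 1`. -/
theorem symmetric_line_cover_lower_bound
    (k s : ℕ) (hs : 1 ≤ s) (hsk : s ≤ k)
    (lam : ℝ) (hlam : 1 < lam)
    (g : Fin k → ℝ≥0 → ℝ)
    (hlip : ∀ r, LipschitzWith 1 (g r))
    (h0 : ∀ r, g r 0 = 0)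
    (hcov : ∀ x : ℝ, 1 ≤ x →
      s ≤ {r : Fin k | ∃ t₁ t₂ : ℝ≥0, (t₁ : ℝ) ≤ lam * x ∧ (t₂ : ℝ) ≤ lam * x ∧
            g r t₁ = x ∧ g r t₂ = -x}.ncard) :
    2 * (((k + s : ℕ) : ℝ) ^ (k + s) / ((s : ℝ) ^ s * (k : ℝ) ^ k)) ^ ((1 : ℝ) / k) + 1
      ≤ lam := by
  classical
  by_contra! hlt
  obtain ⟨c, hc, rfl⟩ : ∃ c, 0 < c ∧ lam = 1 + 2 * c := ⟨(lam - 1) / 2, by linarith, by ring⟩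
  obtain ⟨q, hq, hQ⟩ := exists_one_lt_scaled_amgm (hs.trans hsk) hs hc (by linarith)
  obtain ⟨d, hd⟩ := pow_unbounded_of_one_lt c hq
  set N := d * (2 * k + d * (k + s))
  set C : Fin k → Finset ℕ := fun r => {n ∈ range (N + 1) | SymmCovers (1 + 2 * c) (g r) (q ^ n)}
  have hcount : (N + 1) * s ≤ ∑ r, #(C r) := by
    simpa using mul_le_sum_card_filter (range (N + 1)) _ fun n _ => by
      simpa [Set.ncard_eq_toFinset_card', SymmCovers] using hcov (q ^ n) (one_le_pow₀ hq.le)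
  choose S m hCS hSm hSK using fun r => exists_block_count (hlip r) (h0 r) hq hc hQ hd (C := C r)
    (fun n hn => Nat.lt_succ_iff.1 (mem_range.1 (mem_filter.1 hn).1))
    fun n hn => (mem_filter.1 hn).2
  have hS := succ_mul_sum_le hSm fun r => by simpa using hSK r
  have hCS' := hcount.trans (sum_le_sum fun r _ => hCS r)
  have : (d + 1) * ((N + 1) * s) ≤ N + d * (s * N) :=
    (Nat.mul_le_mul_left _ hCS').trans (hS.trans_eq (by ring))
  nlinarith [Nat.mul_le_mul_right N hs]
end

section
/- Let k and s be natural numbers with 1 ≤ s ≤ k, and let λ > 1 be a real number with μ := (λ-1)/2. For each r ∈ {1,…,k}, let t^{(r)} : ℕ → ℝ be a nondecreasing sequence of positive reals (a single-robot zigzag strategy on the line). Say a point x ≥ 1 is λ-covered by strategy r if there exists an index i with x ≤ t^{(r)}_i and μ·x ≥ t^{(r)}_1 + t^{(r)}_2 + ⋯ + t^{(r)}_i. If every x ≥ 1 is λ-covered by at least s of the k strategies, then λ ≥ 2·((k+s)^{k+s}/(s^s · k^k))^{1/k} + 1. -/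
/-!
Write `μ = (λ - 1) / 2` and `C q = (1 + q) ^ (1 + q) / q ^ q`; the bound to prove is
`μ ≥ C (s / k)`, and `C q` is the best constant in `C q * (b - 1) ≤ b ^ (1 + q)` (Bernoulli's
inequality around the equality point `b = (1 + q) / q`). If `μ < C (s / k)`, continuity gives
`q < s / k` with `μ ≤ C q`, and we show that each robot then covers at most a fraction `≈ q` of
the grid points `β ^ 0, …, β ^ N`, so counting covered pairs gives `s ≤ k q < s`.

For a covered point `x` let `i` be the first turn with `x ≤ t i`, so `S i ≤ μ x` where `S` are the
partial sums. The potential `log (t i) - log x - K log (S i)`, with `K` slightly above `q`, drops by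
at least `log β` between covered grid points: trivially if they share the turn `i`, and otherwise
the later turn `i'` has `S i' ≥ μ / (μ - 1) * S i`, while `t i' ≤ S i' - S i` is controlled by
the inequality above with `b = S i' / S i`. As the potential ranges over an interval of length
`≈ K N log β`, at most `≈ K N` grid points are covered.
-/

open Finset Real Filter Topology

lemma le_of_forall_natCast_mul_le_add {a b C : ℝ} (h : ∀ N : ℕ, N * a ≤ N * b + C) : a ≤ b := by
  by_contra! hab
  obtain ⟨N, hN⟩ := exists_nat_gt (C / (a - b))
  rw [div_lt_iff₀ (sub_pos.2 hab)] at hN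
  linarith [h N]

lemma Finset.card_mul_le_of_le_abs_sub {ι : Type*} {G : Finset ι} {f : ι → ℝ} {a b c : ℝ}
    (hc : 0 < c) (hab : a ≤ b) (hf : ∀ j ∈ G, f j ∈ Set.Icc a b)
    (hsep : ∀ j ∈ G, ∀ j' ∈ G, j ≠ j' → c ≤ |f j - f j'|) :
    (#G : ℝ) * c ≤ b - a + c := by
  have hcard : #G ≤ ⌊(b - a) / c⌋₊ + 1 := by
    simpa using card_le_card_of_injOn (t := range (⌊(b - a) / c⌋₊ + 1))
      (fun j => ⌊(f j - a) / c⌋₊)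
      (fun j hj => mem_range.2 <| Nat.lt_succ_of_le <| Nat.floor_le_floor <|
        div_le_div_of_nonneg_right (by linarith [(hf j hj).2]) hc.le)
      (fun j hj j' hj' heq => by
        by_contra hne
        have hfloor : ⌊(f j - a) / c⌋ = ⌊(f j' - a) / c⌋ := by
          rw [← Int.natCast_floor_eq_floor (div_nonneg (sub_nonneg.2 (hf j hj).1) hc.le),
            ← Int.natCast_floor_eq_floor (div_nonneg (sub_nonneg.2 (hf j' hj').1) hc.le)]
          exact congrArg _ heq
        have hlt := Int.abs_sub_lt_one_of_floor_eq_floor hfloor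
        rw [← sub_div, sub_sub_sub_cancel_right, abs_div, abs_of_pos hc, div_lt_one hc] at hlt
        exact (hsep j hj j' hj' hne).not_gt hlt)
  have hfloor := Nat.floor_le (div_nonneg (sub_nonneg.2 hab) hc.le)
  calc (#G : ℝ) * c ≤ (⌊(b - a) / c⌋₊ + 1) * c := by gcongr; exact_mod_cast hcard
    _ ≤ ((b - a) / c + 1) * c := by gcongr
    _ = b - a + c := by field_simp

namespace Zigzag

noncomputable def criticalRatio (q : ℝ) : ℝ := (1 + q) ^ (1 + q) / q ^ q

lemma criticalRatio_mul_sub_one_le_rpow {q b : ℝ} (hq : 0 < q) (hb : 0 ≤ b) :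
    criticalRatio q * (b - 1) ≤ b ^ (1 + q) := by
  have hbern := one_add_mul_self_le_rpow_one_add (s := b * q / (1 + q) - 1)
    (by have : 0 ≤ b * q / (1 + q) := by positivity
        linarith) (p := 1 + q) (by linarith)
  have hlin : 1 + (1 + q) * (b * q / (1 + q) - 1) = q * (b - 1) := by field_simp; ring
  rw [hlin, add_sub_cancel, div_rpow (by positivity) (by positivity), mul_rpow hb hq.le,
    le_div_iff₀ (by positivity), rpow_add hq, rpow_one] at hbern
  rw [criticalRatio, div_mul_eq_mul_div, div_le_iff₀ (by positivity)]
  nlinarith [rpow_pos_of_pos hq q]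

lemma exists_lt_le_criticalRatio {μ q₀ : ℝ} (hq₀ : 0 < q₀) (hμ : μ < criticalRatio q₀) :
    ∃ q, 0 < q ∧ q < q₀ ∧ μ ≤ criticalRatio q := by
  have hcont : ContinuousAt criticalRatio q₀ :=
    ((continuousAt_const.add continuousAt_id).rpow (continuousAt_const.add continuousAt_id)
      (Or.inr (by simp; linarith))).div (continuousAt_id.rpow continuousAt_id (Or.inr hq₀))
      (rpow_pos_of_pos hq₀ q₀).ne'
  have hev : ∀ᶠ q in 𝓝[<] q₀, 0 < q ∧ μ < criticalRatio q :=
    nhdsWithin_le_nhds ((lt_mem_nhds hq₀).and (hcont.eventually (lt_mem_nhds hμ)))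
  obtain ⟨q, ⟨hq, hμq⟩, hqq₀⟩ := (hev.and self_mem_nhdsWithin).exists
  exact ⟨q, hq, hqq₀, hμq.le⟩

lemma criticalRatio_natCast_div {k s : ℕ} (hk : 0 < k) (hs : 0 < s) :
    criticalRatio (s / k) =
      (((k + s : ℕ) : ℝ) ^ (k + s) / ((s : ℝ) ^ s * (k : ℝ) ^ k)) ^ ((1 : ℝ) / k) := by
  have hk' : (0 : ℝ) < k := by exact_mod_cast hk
  have hs' : (0 : ℝ) < s := by exact_mod_cast hs
  have hpow : ∀ x : ℝ, 0 ≤ x → ∀ n : ℕ, x ^ ((n : ℝ) / k) = (x ^ n) ^ ((1 : ℝ) / k) :=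
    fun x hx n => by rw [div_eq_mul_one_div, rpow_mul hx, rpow_natCast]
  rw [criticalRatio, show (1 : ℝ) + s / k = ((k + s : ℕ) : ℝ) / k by push_cast; field_simp,
    hpow _ (by positivity), hpow _ (by positivity), ← div_rpow (by positivity) (by positivity)]
  congr 1
  rw [div_pow, div_pow]
  field_simp
  ring

def partialSum (t : ℕ → ℝ) (i : ℕ) : ℝ := ∑ j ∈ range (i + 1), t j

def Covers (t : ℕ → ℝ) (μ x : ℝ) : Prop := ∃ i, x ≤ t i ∧ partialSum t i ≤ μ * x

noncomputable def firstTurn (t : ℕ → ℝ) (x : ℝ) : ℕ := sInf {i | x ≤ t i}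

noncomputable def potential (t : ℕ → ℝ) (K x : ℝ) : ℝ :=
  log (t (firstTurn t x)) - log x - K * log (partialSum t (firstTurn t x))

variable {t : ℕ → ℝ} {μ x y : ℝ}

lemma le_partialSum (ht : ∀ i, 0 ≤ t i) (i : ℕ) : t i ≤ partialSum t i :=
  single_le_sum (fun j _ => ht j) (self_mem_range_succ i)

lemma partialSum_mono (ht : ∀ i, 0 ≤ t i) : Monotone (partialSum t) := fun _ _ h =>
  sum_le_sum_of_subset_of_nonneg (range_subset_range.2 (by omega)) fun j _ _ => ht j

lemma partialSum_add_le (ht : ∀ i, 0 ≤ t i) {i i' : ℕ} (h : i < i') :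
    partialSum t i + t i' ≤ partialSum t i' := by
  obtain ⟨i', rfl⟩ := Nat.exists_eq_add_of_lt h
  calc partialSum t i + t (i + i' + 1) ≤ partialSum t (i + i') + t (i + i' + 1) := by
        gcongr; exact partialSum_mono ht (Nat.le_add_right i i')
    _ = partialSum t (i + i' + 1) := (sum_range_succ t _).symm

lemma Covers.le_firstTurn (h : Covers t μ x) : x ≤ t (firstTurn t x) :=
  Nat.sInf_mem (s := {i | x ≤ t i}) (h.imp fun _ hi => hi.1)

lemma Covers.partialSum_firstTurn_le (ht : ∀ i, 0 ≤ t i) (h : Covers t μ x) :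
    partialSum t (firstTurn t x) ≤ μ * x :=
  let ⟨_, hxi, hi⟩ := h
  (partialSum_mono ht (Nat.sInf_le hxi)).trans hi

lemma Covers.firstTurn_mono (hy : Covers t μ y) (hxy : x ≤ y) : firstTurn t x ≤ firstTurn t y :=
  Nat.sInf_le (hxy.trans hy.le_firstTurn)

lemma Covers.eq_of_le_one (ht : ∀ i, 0 < t i) (hμ : μ ≤ 1) (hx : 0 ≤ x) (h : Covers t μ x) :
    t 0 = x := by
  obtain ⟨i, hxi, hi⟩ := h
  have hμx : μ * x ≤ x := by nlinarith
  have h0 : partialSum t 0 = t 0 := by simp [partialSum]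
  rcases Nat.eq_zero_or_pos i with rfl | hpos
  · linarith
  · linarith [partialSum_add_le (fun j => (ht j).le) hpos, ht 0]

lemma one_lt_of_forall_exists_covers {ι : Type*} [Finite ι] {t : ι → ℕ → ℝ}
    (ht : ∀ r i, 0 < t r i) (h : ∀ x, 1 ≤ x → ∃ r, Covers (t r) μ x) : 1 < μ := by
  by_contra! hμ
  refine Set.Ici_infinite (1 : ℝ) ((Set.finite_range fun r => t r 0).subset fun x hx => ?_)
  obtain ⟨r, hr⟩ := h x hx
  exact ⟨r, hr.eq_of_le_one (ht r) hμ (zero_le_one.trans hx)⟩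

lemma log_div_sub_one_le_log_sub_log {S₀ S₁ t₁ : ℝ} (hμ : 1 < μ) (hS₀ : 0 < S₀)
    (hstep : S₀ + t₁ ≤ S₁) (hS₁ : S₁ ≤ μ * t₁) : log (μ / (μ - 1)) ≤ log S₁ - log S₀ := by
  have ht₁ : 0 < t₁ := by nlinarith
  rw [← log_div (by linarith) hS₀.ne']
  refine log_le_log (div_pos (by linarith) (by linarith)) ?_
  rw [div_le_div_iff₀ (by linarith) hS₀]
  nlinarith

lemma log_add_log_le_of_le_criticalRatio {q S₀ S₁ t₁ : ℝ} (hq : 0 < q)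
    (hμq : μ ≤ criticalRatio q) (hμ : 0 < μ) (hS₀ : 0 < S₀) (ht₁ : 0 < t₁)
    (hstep : S₀ + t₁ ≤ S₁) : log μ + log t₁ ≤ (1 + q) * log S₁ - q * log S₀ := by
  have hb : 1 ≤ S₁ / S₀ := by rw [le_div_iff₀ hS₀]; linarith
  have key : μ * t₁ ≤ S₀ * (S₁ / S₀) ^ (1 + q) :=
    calc μ * t₁ ≤ S₀ * (μ * (S₁ / S₀ - 1)) := by
          rw [mul_sub, mul_one, mul_div_assoc', mul_sub, mul_div_cancel₀ _ hS₀.ne']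
          nlinarith
      _ ≤ S₀ * (criticalRatio q * (S₁ / S₀ - 1)) := by gcongr
      _ ≤ S₀ * (S₁ / S₀) ^ (1 + q) := by
          gcongr; exact criticalRatio_mul_sub_one_le_rpow hq (by positivity)
  have := log_le_log (by positivity) key
  rw [log_mul hμ.ne' ht₁.ne', log_mul hS₀.ne' (by positivity), log_rpow (by positivity),
    log_div (by linarith) hS₀.ne'] at this
  linarith

lemma potential_add_le (ht : ∀ i, 0 < t i) {q K c x₀ x₁ : ℝ} (hμ : 1 < μ) (hq : 0 < q)
    (hμq : μ ≤ criticalRatio q) (hKq : q ≤ K) (hx₀ : 0 < x₀) (hx : x₀ ≤ x₁)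
    (h₀ : Covers t μ x₀) (h₁ : Covers t μ x₁) (hc₁ : c ≤ log x₁ - log x₀)
    (hc₂ : c ≤ (K - q) * log (μ / (μ - 1))) :
    potential t K x₁ + c ≤ potential t K x₀ := by
  have ht' : ∀ i, 0 ≤ t i := fun i => (ht i).le
  have hu₀ : log x₀ ≤ log (t (firstTurn t x₀)) := log_le_log hx₀ h₀.le_firstTurn
  have hv₁ : log (partialSum t (firstTurn t x₁)) ≤ log μ + log x₁ := by
    rw [← log_mul (by linarith) (by linarith)]
    exact log_le_log ((ht _).trans_le (le_partialSum ht' _)) (h₁.partialSum_firstTurn_le ht')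
  unfold potential
  rcases (h₁.firstTurn_mono hx).eq_or_lt with heq | hlt
  · rw [heq]
    linarith
  · have hstep := partialSum_add_le ht' hlt
    have hS₀ := (ht _).trans_le (le_partialSum ht' (firstTurn t x₀))
    have hgrow := log_div_sub_one_le_log_sub_log hμ hS₀ hstep
      ((h₁.partialSum_firstTurn_le ht').trans (by gcongr; exact h₁.le_firstTurn))
    have hamgm := log_add_log_le_of_le_criticalRatio hq hμq (by linarith) hS₀ (ht _) hstep
    nlinarith [mul_le_mul_of_nonneg_left hgrow (sub_nonneg.2 hKq)]

lemma Covers.potential_mem_Icc (ht : ∀ i, 0 < t i) {K : ℝ} (hK : 0 ≤ K) (hx : 1 ≤ x)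
    (h : Covers t μ x) : potential t K x ∈ Set.Icc (-K * log (μ * x)) (log μ) := by
  have ht' : ∀ i, 0 ≤ t i := fun i => (ht i).le
  have hxt := h.le_firstTurn
  have htS := le_partialSum ht' (firstTurn t x)
  have hSμ := h.partialSum_firstTurn_le ht'
  have hμ : 0 < μ := pos_of_mul_pos_left (by linarith) (by linarith : (0 : ℝ) ≤ x)
  have hu : log x ≤ log (t (firstTurn t x)) := log_le_log (by linarith) hxt
  have huv : log (t (firstTurn t x)) ≤ log (partialSum t (firstTurn t x)) :=
    log_le_log (by linarith) htS
  have hv : log (partialSum t (firstTurn t x)) ≤ log (μ * x) := log_le_log (by linarith) hSμ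
  have hlogμx : log (μ * x) = log μ + log x := log_mul hμ.ne' (by linarith)
  have hKv := mul_le_mul_of_nonneg_left hv hK
  have hKv₀ := mul_nonneg hK ((log_nonneg hx).trans (hu.trans huv))
  unfold potential
  constructor <;> linarith

open scoped Classical in
theorem card_covers_pow_mul_log_le (ht : ∀ i, 0 < t i) {q β : ℝ} (hμ : 1 < μ) (hq : 0 < q)
    (hμq : μ ≤ criticalRatio q) (hβ : 1 < β) (N : ℕ) :
    #{j ∈ range (N + 1) | Covers t μ (β ^ j)} * log β ≤
      log β + log μ + (q + log β / log (μ / (μ - 1))) * log (μ * β ^ N) := by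
  set K := q + log β / log (μ / (μ - 1))
  set G := {j ∈ range (N + 1) | Covers t μ (β ^ j)}
  have hlogβ := log_pos hβ
  have hlogρ : 0 < log (μ / (μ - 1)) := log_pos (by rw [lt_div_iff₀ (by linarith)]; linarith)
  have hKq : q ≤ K := le_add_of_nonneg_right (by positivity)
  have hK : log β = (K - q) * log (μ / (μ - 1)) := by simp only [K]; field_simp; ring
  have hdrop {j j' : ℕ} (hjj' : j < j') (hj : Covers t μ (β ^ j)) (hj' : Covers t μ (β ^ j')) :
      log β ≤ potential t K (β ^ j) - potential t K (β ^ j') := by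
    have hgap : log β ≤ log (β ^ j') - log (β ^ j) := by
      have : (j : ℝ) + 1 ≤ j' := by exact_mod_cast hjj'
      rw [log_pow, log_pow, ← sub_mul]
      exact le_mul_of_one_le_left hlogβ.le (by linarith)
    linarith [potential_add_le ht hμ hq hμq hKq (by positivity)
      (pow_le_pow_right₀ hβ.le hjj'.le) hj hj' hgap hK.le]
  have hmem : ∀ j ∈ G, potential t K (β ^ j) ∈ Set.Icc (-K * log (μ * β ^ N)) (log μ) := by
    intro j hj
    rw [mem_filter, mem_range] at hj
    have hIcc := hj.2.potential_mem_Icc ht (hq.le.trans hKq) (one_le_pow₀ hβ.le)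
    have : log (μ * β ^ j) ≤ log (μ * β ^ N) :=
      log_le_log (by positivity) (by gcongr; exacts [hβ.le, by omega])
    exact ⟨by nlinarith [hIcc.1], hIcc.2⟩
  have hsep : ∀ j ∈ G, ∀ j' ∈ G, j ≠ j' →
      log β ≤ |potential t K (β ^ j) - potential t K (β ^ j')| := by
    intro j hj j' hj' hne
    rcases hne.lt_or_gt with h | h
    · exact le_abs.2 (Or.inl (hdrop h (mem_filter.1 hj).2 (mem_filter.1 hj').2))
    · exact le_abs.2 (Or.inr (by linarith [hdrop h (mem_filter.1 hj').2 (mem_filter.1 hj).2]))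
  have hlogμβ : 0 ≤ log (μ * β ^ N) :=
    log_nonneg (one_le_mul_of_one_le_of_one_le hμ.le (one_le_pow₀ hβ.le))
  have := card_mul_le_of_le_abs_sub hlogβ (by nlinarith [log_pos hμ]) hmem hsep
  linarith

open scoped Classical in
lemma mul_succ_le_sum_card_covers {ι : Type*} [Fintype ι] {s : ℕ} {t : ι → ℕ → ℝ} {β : ℝ}
    (hcov : ∀ x : ℝ, 1 ≤ x → s ≤ {r | Covers (t r) μ x}.ncard) (hβ : 1 ≤ β) (N : ℕ) :
    s * (N + 1) ≤ ∑ r, #{j ∈ range (N + 1) | Covers (t r) μ (β ^ j)} :=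
  calc s * (N + 1) = ∑ _j ∈ range (N + 1), s := by rw [sum_const, card_range, smul_eq_mul, mul_comm]
    _ ≤ ∑ j ∈ range (N + 1), #{r | Covers (t r) μ (β ^ j)} := sum_le_sum fun j _ => by
        simpa [Set.ncard_eq_toFinset_card'] using hcov (β ^ j) (one_le_pow₀ hβ)
    _ = _ := sum_card_bipartiteAbove_eq_sum_card_bipartiteBelow (fun j r => Covers (t r) μ (β ^ j))

theorem natCast_le_card_mul_add_of_forall_covers {ι : Type*} [Fintype ι] {s : ℕ} {q β : ℝ}
    {t : ι → ℕ → ℝ} (ht : ∀ r i, 0 < t r i) (hμ : 1 < μ) (hq : 0 < q)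
    (hμq : μ ≤ criticalRatio q) (hβ : 1 < β)
    (hcov : ∀ x : ℝ, 1 ≤ x → s ≤ {r | Covers (t r) μ x}.ncard) :
    (s : ℝ) ≤ Fintype.card ι * (q + log β / log (μ / (μ - 1))) := by
  classical
  set n := Fintype.card ι
  set K := q + log β / log (μ / (μ - 1))
  have hlogβ := log_pos hβ
  refine le_of_mul_le_mul_right (le_of_forall_natCast_mul_le_add
    (b := n * K * log β) (C := n * (log β + (1 + K) * log μ)) fun N => ?_) hlogβ
  have hsum : (s * (N + 1) : ℝ) * log β ≤ n * (log β + log μ + K * log (μ * β ^ N)) :=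
    calc (s * (N + 1) : ℝ) * log β
        ≤ (∑ r, #{j ∈ range (N + 1) | Covers (t r) μ (β ^ j)} : ℕ) * log β := by
          gcongr
          exact_mod_cast mul_succ_le_sum_card_covers hcov hβ.le N
      _ = ∑ r, (#{j ∈ range (N + 1) | Covers (t r) μ (β ^ j)} : ℝ) * log β := by
          rw [Nat.cast_sum, sum_mul]
      _ ≤ ∑ _r : ι, (log β + log μ + K * log (μ * β ^ N)) :=
          sum_le_sum fun r _ => card_covers_pow_mul_log_le (ht r) hμ hq hμq hβ N
      _ = n * (log β + log μ + K * log (μ * β ^ N)) := by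
          rw [sum_const, card_univ, nsmul_eq_mul]
  rw [log_mul (by linarith) (by positivity), log_pow] at hsum
  nlinarith

theorem natCast_le_card_mul_of_forall_covers {ι : Type*} [Fintype ι] {s : ℕ} {q : ℝ}
    {t : ι → ℕ → ℝ} (ht : ∀ r i, 0 < t r i) (hμ : 1 < μ) (hq : 0 < q)
    (hμq : μ ≤ criticalRatio q) (hcov : ∀ x : ℝ, 1 ≤ x → s ≤ {r | Covers (t r) μ x}.ncard) :
    (s : ℝ) ≤ Fintype.card ι * q := by
  refine le_of_forall_pos_le_add fun ε hε => ?_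
  set n := Fintype.card ι
  set δ := ε / (n + 1)
  have hρ : 1 < μ / (μ - 1) := by rw [lt_div_iff₀ (by linarith)]; linarith
  have hβ : 1 < (μ / (μ - 1)) ^ δ := one_lt_rpow hρ (by positivity)
  have hsn := natCast_le_card_mul_add_of_forall_covers ht hμ hq hμq hβ hcov
  rw [log_rpow (by positivity), mul_div_cancel_right₀ _ (log_pos hρ).ne'] at hsn
  have hnδ : n * δ ≤ ε := by
    rw [mul_div_assoc', div_le_iff₀ (by positivity)]
    nlinarith
  linarith

end Zigzag

open Zigzag in
theorem zigzag_cover_lower_bound_general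
    (k s : ℕ) (hs : 1 ≤ s) (hsk : s ≤ k)
    (lam : ℝ)
    (t : Fin k → ℕ → ℝ)
    (hpos : ∀ r i, 0 < t r i)
    (hcov : ∀ x : ℝ, 1 ≤ x →
      s ≤ {r : Fin k | ∃ i : ℕ, x ≤ t r i ∧
            (∑ j ∈ Finset.range (i + 1), t r j) ≤ ((lam - 1) / 2) * x}.ncard) :
    2 * (((k + s : ℕ) : ℝ) ^ (k + s) / ((s : ℝ) ^ s * (k : ℝ) ^ k)) ^ ((1 : ℝ) / k) + 1
      ≤ lam := by
  have hcov' : ∀ x : ℝ, 1 ≤ x → s ≤ {r | Covers (t r) ((lam - 1) / 2) x}.ncard := hcov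
  have hk : (0 : ℝ) < k := by exact_mod_cast hs.trans hsk
  have hμ : 1 < (lam - 1) / 2 := one_lt_of_forall_exists_covers hpos fun x hx =>
    Set.nonempty_of_ncard_ne_zero (s := {r | Covers (t r) _ x}) (by have := hcov' x hx; omega)
  rw [← criticalRatio_natCast_div (hs.trans hsk) hs]
  by_contra! hlt
  obtain ⟨q, hq, hqsk, hμq⟩ := exists_lt_le_criticalRatio (μ := (lam - 1) / 2) (q₀ := s / k)
    (by positivity) (by linarith)
  have hsq := natCast_le_card_mul_of_forall_covers hpos hμ hq hμq hcov'
  rw [Fintype.card_fin] at hsq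
  rw [lt_div_iff₀ hk] at hqsk
  linarith

/-- Lower bound for `s`-fold symmetric covering by zigzag strategies.  Each robot
`r` has a nondecreasing sequence `t r` of positive turning points; a point `x ≥ 1`
is `λ`-covered by robot `r` if for some index `i` we have `x ≤ t r i` and
`t r 0 + ⋯ + t r i ≤ μ x` with `μ = (λ-1)/2`.  If every `x ≥ 1` is covered by at
least `s` of the `k` strategies, then `λ ≥ 2((k+s)^(k+s)/(s^s k^k))^(1/k) + 1`. -/
theorem zigzag_cover_lower_bound
    (k s : ℕ) (hs : 1 ≤ s) (hsk : s ≤ k)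
    (lam : ℝ) (hlam : 1 < lam)
    (t : Fin k → ℕ → ℝ)
    (hpos : ∀ r i, 0 < t r i)
    (hmono : ∀ r, Monotone (t r))
    (hcov : ∀ x : ℝ, 1 ≤ x →
      s ≤ {r : Fin k | ∃ i : ℕ, x ≤ t r i ∧
            (∑ j ∈ Finset.range (i + 1), t r j) ≤ ((lam - 1) / 2) * x}.ncard) :
    2 * (((k + s : ℕ) : ℝ) ^ (k + s) / ((s : ℝ) ^ s * (k : ℝ) ^ k)) ^ ((1 : ℝ) / k) + 1
      ≤ lam :=
  zigzag_cover_lower_bound_general k s hs hsk lam t hpos hcov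
end

section
/- Let k and q be natural numbers with q > k ≥ 1, and let λ > 1. For each r ∈ {1,…,k}, let t^{(r)} : ℕ → ℝ be a sequence with t^{(r)}_i ≥ 1 for all i (an ORC strategy). If for every real x ≥ 1 the total number of pairs (r, i) such that x ≤ t^{(r)}_i and ((λ-1)/2)·x ≥ t^{(r)}_1 + ⋯ + t^{(r)}_{i-1} is at least q, then λ ≥ 2·(q^q/((q-k)^{q-k} · k^k))^{1/k} + 1. -/
/-!
Write `μ = (λ - 1) / 2` and `Q` for the constant, and suppose `μ < Q`. In logarithmic coordinates
a round that starts after the robot has travelled `b` and turns at `v` covers a part of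
`[0, log G]` of length at most `log (μ · min v G / max b μ)`, and `q`-fold coverage forces these
lengths to add up to at least `q · log G`. By weighted AM–GM, `Q (ρ - 1) ≤ ρ ^ (q / k)` for
`ρ > 1`, so each such length is at most `q / k` times the increase of the logarithm of the
robot's (clamped) travelled distance, with a gain of `log (Q / μ) > 0` for every *active* round
(one with `μ ≤ b < μ v`); the finitely many rounds with `b < μ` cost a constant. Telescoping
along each robot bounds the total by `q · log G + O(1) - log (Q / μ) · #active`, so only finitely
many rounds are active. Beyond all of them a point `x` is covered only by rounds with `b = μ x`,
at most one per robot, hence by at most `k < q` rounds.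
-/

open Finset Real MeasureTheory

/-- Weighted AM–GM: concavity of `log` at `(p + k) / p` and `(p + k) (ρ - 1) / k` with weights
`p / (p + k)` and `k / (p + k)`, whose weighted mean is `ρ`. -/
lemma mul_log_add_mul_log_sub_one_le {p k : ℝ} (hp : 0 < p) (hk : 0 < k) {ρ : ℝ} (hρ : 1 < ρ) :
    (p + k) * log (p + k) + k * log (ρ - 1) ≤ (p + k) * log ρ + p * log p + k * log k := by
  have hq : 0 < p + k := by positivity
  have hρ1 : 0 < ρ - 1 := by linarith
  have hconc := strictConcaveOn_log_Ioi.concaveOn.2 (Set.mem_Ioi.2 (div_pos hq hp))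
    (Set.mem_Ioi.2 (div_pos (mul_pos hq hρ1) hk)) (div_nonneg hp.le hq.le) (div_nonneg hk.le hq.le)
    (by field_simp)
  have harg : p / (p + k) * ((p + k) / p) + k / (p + k) * ((p + k) * (ρ - 1) / k) = ρ := by
    field_simp; ring
  simp only [smul_eq_mul] at hconc
  rw [harg, log_div hq.ne' hp.ne', log_div (by positivity) hk.ne',
    log_mul hq.ne' hρ1.ne'] at hconc
  have := mul_le_mul_of_nonneg_left hconc hq.le
  field_simp at this
  linarith

lemma natCast_mul_measure_le_sum_measure_inter {α ι : Type*} [MeasurableSpace α] (ν : Measure α)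
    {s : Finset ι} {I : ι → Set α} [∀ x, DecidablePred (x ∈ I ·)]
    (hI : ∀ i ∈ s, MeasurableSet (I i)) {S : Set α} {q : ℕ}
    (hcov : ∀ x ∈ S, q ≤ #{i ∈ s | x ∈ I i}) : q * ν S ≤ ∑ i ∈ s, ν (I i ∩ S) := by
  have hmeas : ∀ i ∈ s, Measurable ((I i).indicator (1 : α → ENNReal)) :=
    fun i hi => measurable_one.indicator (hI i hi)
  calc q * ν S = ∫⁻ _ in S, (q : ENNReal) ∂ν := (setLIntegral_const S _).symm
    _ ≤ ∫⁻ x in S, ∑ i ∈ s, (I i).indicator 1 x ∂ν := by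
      refine setLIntegral_mono (Finset.measurable_sum _ hmeas) fun x hx => ?_
      simpa [Set.indicator_apply] using hcov x hx
    _ = ∑ i ∈ s, ν (I i ∩ S) := by
      rw [lintegral_finsetSum _ hmeas]
      refine Finset.sum_congr rfl fun i hi => ?_
      rw [lintegral_indicator_one (hI i hi), Measure.restrict_apply (hI i hi)]

namespace ORC

noncomputable def coverConst (k q : ℕ) : ℝ :=
  ((q : ℝ) ^ q / (((q - k : ℕ) : ℝ) ^ (q - k) * (k : ℝ) ^ k)) ^ ((1 : ℝ) / k)

lemma coverConst_pos {k q : ℕ} (hk : 0 < k) (hkq : k < q) : 0 < coverConst k q := by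
  have hq : 0 < q := (Nat.zero_le k).trans_lt hkq
  have hp : 0 < q - k := Nat.sub_pos_of_lt hkq
  unfold coverConst
  generalize q - k = p at hp
  positivity

lemma coverConst_mul_sub_one_le {k q : ℕ} (hk : 0 < k) (hkq : k < q) {ρ : ℝ} (hρ : 1 < ρ) :
    coverConst k q * (ρ - 1) ≤ ρ ^ ((q : ℝ) / k) := by
  have hkR : (0 : ℝ) < k := by exact_mod_cast hk
  have hpR : (0 : ℝ) < ((q - k : ℕ) : ℝ) := by exact_mod_cast Nat.sub_pos_of_lt hkq
  have hpk : ((q - k : ℕ) : ℝ) + k = q := by rw [Nat.cast_sub hkq.le]; ring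
  have hamgm := mul_log_add_mul_log_sub_one_le hpR hkR hρ
  rw [hpk] at hamgm
  have hρ1 : 0 < ρ - 1 := by linarith
  have hq : 0 < q := (Nat.zero_le k).trans_lt hkq
  rw [← log_le_log_iff (mul_pos (coverConst_pos hk hkq) hρ1) (by positivity),
    log_mul (coverConst_pos hk hkq).ne' hρ1.ne', log_rpow (by linarith), coverConst,
    log_rpow (by positivity), log_div (by positivity) (by positivity),
    log_mul (by positivity) (by positivity), log_pow, log_pow, log_pow]
  field_simp
  linarith

def partialSum (t : ℕ → ℝ) (i : ℕ) : ℝ := ∑ j ∈ range i, t j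

lemma partialSum_zero (t : ℕ → ℝ) : partialSum t 0 = 0 := sum_range_zero t

lemma partialSum_succ (t : ℕ → ℝ) (i : ℕ) : partialSum t (i + 1) = partialSum t i + t i :=
  sum_range_succ t i

lemma natCast_le_partialSum {t : ℕ → ℝ} (ht : ∀ i, 1 ≤ t i) (i : ℕ) :
    (i : ℝ) ≤ partialSum t i := by
  simpa [partialSum] using card_nsmul_le_sum (range i) t 1 fun j _ => ht j

lemma strictMono_partialSum {t : ℕ → ℝ} (ht : ∀ i, 0 < t i) : StrictMono (partialSum t) :=
  strictMono_nat_of_lt_succ fun i => by rw [partialSum_succ]; linarith [ht i]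

/-- A round with prior sum `b` and turning point `v` covers `x ∈ [1, G]` only if
`max b μ / μ ≤ x ≤ min v G`; this is the length of that range in logarithmic coordinates. -/
noncomputable def coverLogLength (μ G b v : ℝ) : ℝ := max 0 (log (μ * min v G / max b μ))

lemma coverLogLength_nonneg (μ G b v : ℝ) : 0 ≤ coverLogLength μ G b v := le_max_left _ _

/-- The distance travelled, clamped to `[μ, (μ + 1) G]`; its logarithm telescopes along the rounds
of one robot and pays for the log-lengths they cover. -/
noncomputable def potential (μ G b : ℝ) : ℝ := min (max b μ) ((μ + 1) * G)

section Round

variable {μ G : ℝ}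

lemma volume_inter_Icc_le_coverLogLength (hμ : 0 < μ) (hG : 1 ≤ G) {b v : ℝ} (hv : 0 < v) :
    volume ({s : ℝ | exp s ≤ v ∧ b ≤ μ * exp s} ∩ Set.Icc 0 (log G)) ≤
      ENNReal.ofReal (coverLogLength μ G b v) := by
  have hw : 0 < min v G := lt_min hv (by linarith)
  calc _ ≤ volume (Set.Icc (log (max b μ / μ)) (log (min v G))) := by
        refine measure_mono fun s ⟨⟨hsv, hsb⟩, hs0, hsG⟩ => ⟨?_, ?_⟩
        · rw [log_le_iff_le_exp (by positivity), div_le_iff₀' hμ]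
          exact max_le hsb (le_mul_of_one_le_right hμ.le (one_le_exp hs0))
        · rw [le_log_iff_exp_le hw]
          exact le_min hsv ((le_log_iff_exp_le (by linarith)).1 hsG)
    _ ≤ ENNReal.ofReal (coverLogLength μ G b v) := by
        rw [Real.volume_Icc, coverLogLength, ← log_div hw.ne' (by positivity), div_div_eq_mul_div,
          mul_comm]
        exact ENNReal.ofReal_le_ofReal (le_max_right _ _)

lemma potential_pos (hμ : 0 < μ) (hG : 1 ≤ G) (b : ℝ) : 0 < potential μ G b :=
  lt_min (lt_max_of_lt_right hμ) (by nlinarith)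

lemma monotone_potential : Monotone (potential μ G) :=
  fun _ _ h => min_le_min_right _ (max_le_max_right _ h)

lemma coverLogLength_add_le {Q κ b v : ℝ} (hμ : 0 < μ) (hG : 1 ≤ G) (hQ : 0 < Q) (hκ : 0 ≤ κ)
    (hQκ : ∀ ρ, 1 < ρ → Q * (ρ - 1) ≤ ρ ^ κ) (hv : 1 ≤ v) :
    coverLogLength μ G b v + (if μ ≤ b ∧ b < μ * min v G then log (Q / μ) else 0) ≤
      κ * (log (potential μ G (b + v)) - log (potential μ G b)) + (if b < μ then log v else 0) := by
  have hpot : 0 ≤ κ * (log (potential μ G (b + v)) - log (potential μ G b)) :=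
    mul_nonneg hκ (sub_nonneg.2 (log_le_log (potential_pos hμ hG b)
      (monotone_potential (by linarith))))
  have hw : 1 ≤ min v G := le_min hv hG
  by_cases hcheap : b < μ
  · rw [if_neg fun h => (h.1.trans_lt hcheap).false, if_pos hcheap, add_zero, coverLogLength,
      max_eq_right hcheap.le, mul_div_cancel_left₀ _ hμ.ne']
    have : log (min v G) ≤ log v := log_le_log (by linarith) (min_le_left v G)
    linarith [max_le (log_nonneg (hw.trans (min_le_left v G))) this]
  rw [if_neg hcheap, add_zero]
  have hμb : μ ≤ b := not_lt.1 hcheap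
  by_cases hact : b < μ * min v G
  · rw [if_pos ⟨hμb, hact⟩]
    have hb : 0 < b := hμ.trans_le hμb
    have hwv : min v G ≤ v := min_le_left v G
    have hwG : min v G ≤ G := min_le_right v G
    have hpot_b : potential μ G b = b := by
      rw [potential, max_eq_left hμb, min_eq_left (by nlinarith)]
    have hpot_bv : b + min v G ≤ potential μ G (b + v) :=
      le_min (le_max_of_le_left (by linarith)) (by nlinarith)
    have hρ : 1 < (b + min v G) / b := by rw [one_lt_div hb]; linarith
    calc coverLogLength μ G b v + log (Q / μ) = log (Q * ((b + min v G) / b - 1)) := by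
          rw [coverLogLength, max_eq_left hμb,
            max_eq_right (log_nonneg ((one_le_div hb).2 hact.le)),
            ← log_mul (by positivity) (by positivity)]
          congr 1
          field_simp
          ring
      _ ≤ log (((b + min v G) / b) ^ κ) :=
          log_le_log (mul_pos hQ (sub_pos.2 hρ)) (hQκ _ hρ)
      _ = κ * (log (b + min v G) - log b) := by
          rw [log_rpow (by positivity), log_div (by positivity) hb.ne']
      _ ≤ κ * (log (potential μ G (b + v)) - log (potential μ G b)) := by
          rw [hpot_b]
          gcongr
  · have hzero : coverLogLength μ G b v = 0 := by
      refine max_eq_left (log_nonpos (by positivity) ?_)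
      rw [max_eq_left hμb, div_le_one (by linarith)]
      exact not_lt.1 hact
    rw [if_neg fun h => hact h.2, hzero, add_zero]
    exact hpot

end Round

section Robot

variable {μ G Q κ : ℝ} {t : ℕ → ℝ}

lemma sum_ite_partialSum_lt_le (ht : ∀ i, 1 ≤ t i) (N : ℕ) :
    ∑ i ∈ range N, (if partialSum t i < μ then log (t i) else 0) ≤
      ∑ i ∈ range ⌈μ⌉₊, log (t i) := by
  rw [← sum_filter]
  refine sum_le_sum_of_subset_of_nonneg (fun i hi => ?_) fun i _ _ => log_nonneg (ht i)
  rw [mem_filter] at hi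
  exact mem_range.2 (Nat.lt_ceil.2 ((natCast_le_partialSum ht i).trans_lt hi.2))

lemma sum_coverLogLength_add_le (hμ : 0 < μ) (hG : 1 ≤ G) (hQ : 0 < Q) (hκ : 0 ≤ κ)
    (hQκ : ∀ ρ, 1 < ρ → Q * (ρ - 1) ≤ ρ ^ κ) (ht : ∀ i, 1 ≤ t i) (N : ℕ) :
    ∑ i ∈ range N, (coverLogLength μ G (partialSum t i) (t i) +
        if μ ≤ partialSum t i ∧ partialSum t i < μ * min (t i) G then log (Q / μ) else 0) ≤
      κ * log ((μ + 1) * G / μ) + ∑ i ∈ range ⌈μ⌉₊, log (t i) := by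
  have htel : log (potential μ G (partialSum t N)) - log (potential μ G (partialSum t 0)) ≤
      log ((μ + 1) * G / μ) := by
    have hpot0 : potential μ G (partialSum t 0) = μ := by
      rw [potential, partialSum_zero, max_eq_right hμ.le, min_eq_left (by nlinarith)]
    rw [hpot0, log_div (by positivity) hμ.ne']
    gcongr
    · exact potential_pos hμ hG _
    · exact min_le_right _ _
  calc _ ≤ ∑ i ∈ range N, (κ * (log (potential μ G (partialSum t (i + 1))) -
          log (potential μ G (partialSum t i))) + if partialSum t i < μ then log (t i) else 0) := by
        refine sum_le_sum fun i _ => ?_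
        rw [partialSum_succ]
        exact coverLogLength_add_le hμ hG hQ hκ hQκ (ht i)
    _ ≤ κ * log ((μ + 1) * G / μ) + ∑ i ∈ range ⌈μ⌉₊, log (t i) := by
        rw [sum_add_distrib, ← mul_sum,
          sum_range_sub (fun i => log (potential μ G (partialSum t i)))]
        gcongr
        exact sum_ite_partialSum_lt_le ht N

end Robot

section Robots

variable {k q : ℕ} {t : Fin k → ℕ → ℝ} {μ : ℝ}

def coveredRounds (t : Fin k → ℕ → ℝ) (μ x : ℝ) : Set (Fin k × ℕ) :=
  {e | x ≤ t e.1 e.2 ∧ partialSum (t e.1) e.2 ≤ μ * x}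

def activeRounds (t : Fin k → ℕ → ℝ) (μ : ℝ) : Set (Fin k × ℕ) :=
  {e | μ ≤ partialSum (t e.1) e.2 ∧ partialSum (t e.1) e.2 < μ * t e.1 e.2}

lemma natCast_mul_log_le_sum_coverLogLength (ht : ∀ r i, 1 ≤ t r i) (hμ : 0 < μ)
    (hcov : ∀ x : ℝ, 1 ≤ x → q ≤ (coveredRounds t μ x).ncard) {G : ℝ} (hG : 1 ≤ G) :
    q * log G ≤ ∑ e ∈ univ ×ˢ range (⌊μ * G⌋₊ + 1),
      coverLogLength μ G (partialSum (t e.1) e.2) (t e.1 e.2) := by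
  classical
  set U : Finset (Fin k × ℕ) := univ ×ˢ range (⌊μ * G⌋₊ + 1)
  set I : Fin k × ℕ → Set ℝ := fun e => {s | e ∈ coveredRounds t μ (exp s)}
  have hI : ∀ e ∈ U, MeasurableSet (I e) := fun e _ =>
    show MeasurableSet ({s | exp s ≤ t e.1 e.2} ∩ {s | partialSum (t e.1) e.2 ≤ μ * exp s}) from
      (measurableSet_le (by fun_prop) (by fun_prop)).inter
        (measurableSet_le (by fun_prop) (by fun_prop))
  have hmult : ∀ s ∈ Set.Icc 0 (log G), q ≤ #{e ∈ U | s ∈ I e} := by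
    rintro s ⟨hs0, hsG⟩
    have hsub : coveredRounds t μ (exp s) ⊆ ↑{e ∈ U | s ∈ I e} := by
      refine fun e he => mem_filter.2 ⟨mem_product.2 ⟨mem_univ _, mem_range.2 ?_⟩, he⟩
      have : μ * exp s ≤ μ * G := by
        gcongr
        exact (le_log_iff_exp_le (by linarith)).1 hsG
      have := (natCast_le_partialSum (ht e.1) e.2).trans (he.2.trans this)
      exact Nat.lt_succ_of_le (Nat.le_floor this)
    exact (hcov _ (one_le_exp hs0)).trans
      ((Set.ncard_le_ncard hsub (finite_toSet _)).trans (Set.ncard_coe_finset _).le)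
  have hvol := natCast_mul_measure_le_sum_measure_inter volume hI hmult
  rw [Real.volume_Icc, sub_zero] at hvol
  rw [← ENNReal.ofReal_le_ofReal_iff (sum_nonneg fun _ _ => coverLogLength_nonneg _ _ _ _),
    ENNReal.ofReal_mul (Nat.cast_nonneg _), ENNReal.ofReal_natCast,
    ENNReal.ofReal_sum_of_nonneg fun _ _ => coverLogLength_nonneg _ _ _ _]
  exact hvol.trans (sum_le_sum fun e _ =>
    volume_inter_Icc_le_coverLogLength hμ hG (by linarith [ht e.1 e.2]))

lemma log_div_mul_card_active_le (hk : 0 < k) (hkq : k < q) (ht : ∀ r i, 1 ≤ t r i) (hμ : 0 < μ)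
    (hcov : ∀ x : ℝ, 1 ≤ x → q ≤ (coveredRounds t μ x).ncard) {G : ℝ} (hG : 1 ≤ G) :
    log (coverConst k q / μ) * #{e ∈ univ ×ˢ range (⌊μ * G⌋₊ + 1) |
        μ ≤ partialSum (t e.1) e.2 ∧ partialSum (t e.1) e.2 < μ * min (t e.1 e.2) G} ≤
      q * log ((μ + 1) / μ) + ∑ r, ∑ i ∈ range ⌈μ⌉₊, log (t r i) := by
  set N := ⌊μ * G⌋₊ + 1
  have hkR : (k : ℝ) ≠ 0 := by exact_mod_cast hk.ne'
  have htotal : ∑ e ∈ univ ×ˢ range N,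
      (coverLogLength μ G (partialSum (t e.1) e.2) (t e.1 e.2) +
        if μ ≤ partialSum (t e.1) e.2 ∧ partialSum (t e.1) e.2 < μ * min (t e.1 e.2) G then
          log (coverConst k q / μ) else 0) ≤
      q * log ((μ + 1) * G / μ) + ∑ r, ∑ i ∈ range ⌈μ⌉₊, log (t r i) := by
    rw [sum_product]
    calc _ ≤ ∑ r : Fin k, ((q / k : ℝ) * log ((μ + 1) * G / μ) + ∑ i ∈ range ⌈μ⌉₊, log (t r i)) :=
          sum_le_sum fun r _ => sum_coverLogLength_add_le hμ hG (coverConst_pos hk hkq)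
            (by positivity) (fun _ hρ => coverConst_mul_sub_one_le hk hkq hρ) (ht r) N
      _ = _ := by
          rw [sum_add_distrib, sum_const, card_univ, Fintype.card_fin, nsmul_eq_mul, ← mul_assoc,
            mul_div_cancel₀ _ hkR]
  rw [sum_add_distrib, ← sum_filter, sum_const, nsmul_eq_mul, mul_div_right_comm,
    log_mul (by positivity) (by positivity), mul_add] at htotal
  linarith [natCast_mul_log_le_sum_coverLogLength ht hμ hcov hG]

lemma activeRounds_finite (hk : 0 < k) (hkq : k < q) (ht : ∀ r i, 1 ≤ t r i) (hμ : 0 < μ)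
    (hμQ : μ < coverConst k q) (hcov : ∀ x : ℝ, 1 ≤ x → q ≤ (coveredRounds t μ x).ncard) :
    (activeRounds t μ).Finite := by
  set C := q * log ((μ + 1) / μ) + ∑ r : Fin k, ∑ i ∈ range ⌈μ⌉₊, log (t r i)
  set δ := log (coverConst k q / μ)
  have hδ : 0 < δ := log_pos ((one_lt_div hμ).2 hμQ)
  by_contra hinf
  obtain ⟨F, hFsub, hFcard⟩ := Set.Infinite.exists_subset_card_eq hinf (⌈C / δ⌉₊ + 1)
  have ht0 : ∀ e ∈ F, 0 ≤ t e.1 e.2 := fun e _ => zero_le_one.trans (ht e.1 e.2)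
  set G := 1 + ∑ e ∈ F, t e.1 e.2
  have htG : ∀ e ∈ F, t e.1 e.2 ≤ G := fun e he => by linarith [single_le_sum ht0 he]
  have hG : 1 ≤ G := by linarith [sum_nonneg ht0]
  have hF : F ⊆ {e ∈ (univ : Finset (Fin k)) ×ˢ range (⌊μ * G⌋₊ + 1) |
      μ ≤ partialSum (t e.1) e.2 ∧ partialSum (t e.1) e.2 < μ * min (t e.1 e.2) G} := by
    intro e he
    obtain ⟨hμb, hbt⟩ := hFsub he
    rw [mem_filter, min_eq_left (htG e he)]
    refine ⟨mem_product.2 ⟨mem_univ _, mem_range.2 (Nat.lt_succ_of_le (Nat.le_floor ?_))⟩, hμb, hbt⟩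
    calc (e.2 : ℝ) ≤ partialSum (t e.1) e.2 := natCast_le_partialSum (ht e.1) e.2
      _ ≤ μ * G := hbt.le.trans (by gcongr; exact htG e he)
  have hcard : δ * #F ≤ C :=
    (mul_le_mul_of_nonneg_left (by exact_mod_cast card_le_card hF) hδ.le).trans
      (log_div_mul_card_active_le hk hkq ht hμ hcov hG)
  rw [hFcard, ← le_div_iff₀' hδ] at hcard
  push_cast at hcard
  linarith [Nat.le_ceil (C / δ)]

lemma ncard_le_of_forall_partialSum_eq (ht : ∀ r i, 0 < t r i) {s : Set (Fin k × ℕ)} {c : ℝ}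
    (hs : ∀ e ∈ s, partialSum (t e.1) e.2 = c) : s.ncard ≤ k := by
  calc s.ncard ≤ (Set.univ : Set (Fin k)).ncard :=
        Set.ncard_le_ncard_of_injOn Prod.fst (fun _ _ => Set.mem_univ _) ?_ Set.finite_univ
    _ = k := by simp
  rintro ⟨r, i⟩ he ⟨r', i'⟩ he' (rfl : r = r')
  exact congrArg _ ((strictMono_partialSum (ht r)).injective ((hs _ he).trans (hs _ he').symm))

lemma exists_ncard_coveredRounds_le (ht : ∀ r i, 1 ≤ t r i) (hμ : 0 < μ)
    (hfin : (activeRounds t μ).Finite) : ∃ x : ℝ, 1 ≤ x ∧ (coveredRounds t μ x).ncard ≤ k := by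
  have hcheap : {e : Fin k × ℕ | partialSum (t e.1) e.2 < μ}.Finite :=
    (finite_toSet (univ ×ˢ range ⌈μ⌉₊)).subset fun e he => mem_product.2 ⟨mem_univ _,
      mem_range.2 (Nat.lt_ceil.2 ((natCast_le_partialSum (ht e.1) e.2).trans_lt he))⟩
  obtain ⟨T, hT⟩ := ((hfin.union hcheap).image fun e => t e.1 e.2).bddAbove
  set x := max 1 (T + 1)
  refine ⟨x, le_max_left _ _, ncard_le_of_forall_partialSum_eq (c := μ * x)
    (fun r i => zero_lt_one.trans_le (ht r i)) ?_⟩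
  rintro e ⟨hx, hb⟩
  have hnot : e ∉ activeRounds t μ ∪ {e | partialSum (t e.1) e.2 < μ} := fun he => by
    linarith [hT ⟨e, he, rfl⟩, le_max_right 1 (T + 1)]
  simp only [activeRounds, Set.mem_union, Set.mem_ofPred_eq, not_or, not_and, not_lt] at hnot
  exact le_antisymm hb ((mul_le_mul_of_nonneg_left hx hμ.le).trans (hnot.1 hnot.2))

end Robots

end ORC

open ORC

/-- Lower bound for `q`-fold covering of `[1,∞)` with `k` robots in the
one-ray-cover-with-returns (ORC) setting.  Each robot `r` has a sequence
`t r : ℕ → ℝ` of turning points (all `≥ 1`); a point `x ≥ 1` is `λ`-covered in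
round `i` iff `x ≤ t r i` and `t r 0 + ⋯ + t r (i-1) ≤ ((λ-1)/2)·x`.  If every
`x ≥ 1` is covered in at least `q` rounds (counted with multiplicity over all
robots and rounds), then `λ ≥ 2 (q^q/((q-k)^(q-k) k^k))^(1/k) + 1`. -/
theorem orc_cover_lower_bound
    (k q : ℕ) (hk : 1 ≤ k) (hkq : k < q)
    (lam : ℝ) (hlam : 1 < lam)
    (t : Fin k → ℕ → ℝ)
    (ht : ∀ r i, 1 ≤ t r i)
    (hcov : ∀ x : ℝ, 1 ≤ x →
      q ≤ {p : Fin k × ℕ | x ≤ t p.1 p.2 ∧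
            (∑ j ∈ Finset.range p.2, t p.1 j) ≤ ((lam - 1) / 2) * x}.ncard) :
    2 * ((q : ℝ) ^ q / (((q - k : ℕ) : ℝ) ^ (q - k) * (k : ℝ) ^ k)) ^ ((1 : ℝ) / k) + 1
      ≤ lam := by
  set μ := (lam - 1) / 2
  have hμ : 0 < μ := by simp only [μ]; linarith
  by_contra! hlt
  have hμQ : μ < coverConst k q := by simp only [μ, coverConst]; linarith
  obtain ⟨x, hx, hxk⟩ :=
    exists_ncard_coveredRounds_le ht hμ (activeRounds_finite hk hkq ht hμ hμQ hcov)
  exact absurd ((hcov x hx).trans hxk) (by omega)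
end

section
/- Let k and q be natural numbers with q > k ≥ 1, and let ε > 0. There exists a real N ≥ 1 (depending only on k, q, ε) such that: for every λ > 1 and every family of k ORC strategies t^{(1)}, …, t^{(k)} (sequences of reals ≥ 1), if every x ∈ [1, N] is λ-covered in at least q rounds counted with multiplicity over all robots and rounds, then λ ≥ 2·(q^q/((q-k)^{q-k} · k^k))^{1/k} + 1 − ε. -/
/-!
Write `μ = (λ - 1) / 2` and `u = log x`. Round `i` of a robot with prefix sum
`S = t₁ + ⋯ + t_{i-1}` covers the `u`-interval `[log (S / μ), log tᵢ]`, so a `q`-fold cover of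
`[1, N]` forces these intervals, clipped to `[0, log N]`, to have total length at least `q log N`.

Conversely let `1 < α` with `μ ≤ G(α) = α^α / (α-1)^(α-1)`. Bernoulli's inequality gives
`G(α) (ρ - 1) ≤ ρ^α`, whence `μ tᵢ / S ≤ ((S + tᵢ) / S)^α`: each round's length is at most `α`
times the increase of the potential `log S`, clamped to `[0, log N + log G(α)]`. So each robot
contributes at most `α (log N + log G(α))`, which for `k α < q` and `N` large contradicts the
lower bound. Hence `μ > G(α)` for every `α < q / k`, and `G(q / k)` is the constant of the
theorem.
-/

open Real Finset MeasureTheory Filter Topology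

noncomputable def searchConst (a : ℝ) : ℝ := a ^ a / (a - 1) ^ (a - 1)

section searchConst

variable {a : ℝ}

lemma searchConst_eq (ha : 1 < a) : searchConst a = (a / (a - 1)) ^ a * (a - 1) := by
  have ha1 : 0 < a - 1 := by linarith
  rw [searchConst, div_rpow (by linarith) ha1.le, rpow_sub_one ha1.ne']
  field_simp

lemma le_searchConst (ha : 1 < a) : a ≤ searchConst a := by
  have ha1 : 0 < a - 1 := by linarith
  have hbase : 1 ≤ a / (a - 1) := by rw [one_le_div ha1]; linarith
  calc a = a / (a - 1) * (a - 1) := by field_simp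
    _ ≤ (a / (a - 1)) ^ a * (a - 1) := by gcongr; exact self_le_rpow_of_one_le hbase ha.le
    _ = searchConst a := (searchConst_eq ha).symm

/-- Bernoulli's inequality at `ρ / ρ₀`, `ρ₀ = a / (a - 1)`, which is the case of equality. -/
lemma searchConst_mul_sub_one_le_rpow (ha : 1 < a) {ρ : ℝ} (hρ : 0 ≤ ρ) :
    searchConst a * (ρ - 1) ≤ ρ ^ a := by
  have ha1 : 0 < a - 1 := by linarith
  set ρ₀ := a / (a - 1)
  have hρ₀ : 0 < ρ₀ := div_pos (by linarith) ha1
  have hz : -1 ≤ ρ / ρ₀ - 1 := by linarith [div_nonneg hρ hρ₀.le]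
  calc searchConst a * (ρ - 1) = ρ₀ ^ a * (1 + a * (ρ / ρ₀ - 1)) := by
        rw [searchConst_eq ha]; simp only [ρ₀]; field_simp; ring
    _ ≤ ρ₀ ^ a * (1 + (ρ / ρ₀ - 1)) ^ a := by
        gcongr; exact one_add_mul_self_le_rpow_one_add hz ha.le
    _ = ρ ^ a := by
        rw [add_sub_cancel, div_rpow hρ hρ₀.le,
          mul_div_cancel₀ _ (rpow_pos_of_pos hρ₀ a).ne']

lemma continuousAt_searchConst (ha : 1 < a) : ContinuousAt searchConst a := by
  have ha1 : 0 < a - 1 := by linarith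
  exact ((continuousAt_id.rpow continuousAt_id (Or.inl (zero_lt_one.trans ha).ne')).div
    ((continuousAt_id.sub continuousAt_const).rpow (continuousAt_id.sub continuousAt_const)
      (Or.inl ha1.ne')) (rpow_pos_of_pos ha1 _).ne')

lemma searchConst_div_natCast {k q : ℕ} (hk : 1 ≤ k) (hkq : k < q) :
    searchConst (q / k) =
      ((q : ℝ) ^ q / (((q - k : ℕ) : ℝ) ^ (q - k) * (k : ℝ) ^ k)) ^ ((1 : ℝ) / k) := by
  have hk0 : (0 : ℝ) < k := by exact_mod_cast hk
  have hqk : (k : ℝ) < q := by exact_mod_cast hkq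
  have hq0 : (0 : ℝ) < q := by linarith
  have hsub : ((q - k : ℕ) : ℝ) = q - k := by push_cast [Nat.cast_sub hkq.le]; ring
  have hpos : 0 < searchConst (q / k) := by
    linarith [le_searchConst ((one_lt_div hk0).mpr hqk), div_pos hq0 hk0]
  have hpow : searchConst (q / k) ^ k =
      (q : ℝ) ^ q / (((q - k : ℕ) : ℝ) ^ (q - k) * (k : ℝ) ^ k) := by
    have hsub_one : (q : ℝ) / k - 1 = ((q - k : ℕ) : ℝ) / k := by rw [hsub]; field_simp
    have hkpow : (k : ℝ) ^ q = (k : ℝ) ^ (q - k) * (k : ℝ) ^ k := by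
      rw [← pow_add, Nat.sub_add_cancel hkq.le]
    rw [searchConst, hsub_one, div_pow, ← rpow_mul_natCast (by positivity),
      ← rpow_mul_natCast (by positivity), div_mul_cancel₀ _ hk0.ne', div_mul_cancel₀ _ hk0.ne',
      rpow_natCast, rpow_natCast, div_pow, div_pow, hkpow]
    field_simp
  rw [← hpow, one_div, pow_rpow_inv_natCast hpos.le (by omega)]

end searchConst

/-- The length of the set of `log x`, `x ∈ [1, e^M]`, that a round with prefix sum `S` and turning
point `t` λ-covers, `μ = (λ - 1) / 2`. -/
noncomputable def logCoverLength (μ M S t : ℝ) : ℝ :=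
  max (min (log t) M - max 0 (log (S / μ))) 0

noncomputable def clampLog (L s : ℝ) : ℝ := max 0 (min (log s) L)

lemma clampLog_mono {L s s' : ℝ} (hs : 0 ≤ s) (hss' : s ≤ s') :
    clampLog L s ≤ clampLog L s' := by
  rcases hs.eq_or_lt with rfl | hs
  · simp [clampLog]
  · unfold clampLog; gcongr

lemma log_mul_div_le_of_le_searchConst {α μ S t : ℝ} (hα : 1 < α) (hμ : 0 < μ)
    (hμα : μ ≤ searchConst α) (hS : 0 < S) (ht : 0 < t) :
    log (μ * t / S) ≤ α * (log (S + t) - log S) := by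
  have hρ : μ * t / S ≤ ((S + t) / S) ^ α :=
    calc μ * t / S ≤ searchConst α * ((S + t) / S - 1) := by
          rw [add_div, div_self hS.ne', add_sub_cancel_left, mul_div_assoc]; gcongr
      _ ≤ ((S + t) / S) ^ α :=
          searchConst_mul_sub_one_le_rpow hα (div_nonneg (by linarith) hS.le)
  calc log (μ * t / S) ≤ log (((S + t) / S) ^ α) := log_le_log (by positivity) hρ
    _ = α * (log (S + t) - log S) := by
        rw [log_rpow (by positivity), log_div (by positivity : S + t ≠ 0) hS.ne']

lemma logCoverLength_le_mul_clampLog_sub {α μ M L S t : ℝ} (hα : 1 < α) (hμ : 0 < μ)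
    (hμα : μ ≤ searchConst α) (hML : M ≤ L) (hμL : M + log μ ≤ L) (hS : 0 ≤ S) (ht : 0 < t) :
    logCoverLength μ M S t ≤ α * (clampLog L (S + t) - clampLog L S) := by
  have hΔ : 0 ≤ clampLog L (S + t) - clampLog L S :=
    sub_nonneg.mpr (clampLog_mono hS (by linarith))
  have hΔα := le_mul_of_one_le_left hΔ hα.le
  refine max_le ?_ (by positivity)
  rcases le_or_gt S 1 with hS1 | hS1
  · have hstart : clampLog L S = 0 := by simp [clampLog, log_nonpos hS hS1]
    have hend : min (log t) M ≤ clampLog L (S + t) :=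
      (min_le_min (log_le_log ht (by linarith)) hML).trans (le_max_right _ _)
    linarith [le_max_left 0 (log (S / μ))]
  have hS0 : 0 < S := by linarith
  have hlogS : 0 < log S := log_pos hS1
  have hlogS_le : log S ≤ log (S + t) := log_le_log hS0 (by linarith)
  have hlogSμ : log (S / μ) = log S - log μ := log_div hS0.ne' hμ.ne'
  have hstart := le_max_right 0 (log (S / μ))
  rcases le_or_gt (log (S + t)) L with hSt | hSt
  · have hS' : clampLog L S = log S := by
      rw [clampLog, min_eq_left (hlogS_le.trans hSt), max_eq_right hlogS.le]
    have hSt' : clampLog L (S + t) = log (S + t) := by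
      rw [clampLog, min_eq_left hSt, max_eq_right (hlogS.le.trans hlogS_le)]
    have hround := log_mul_div_le_of_le_searchConst hα hμ hμα hS0 ht
    rw [log_div (by positivity) hS0.ne', log_mul hμ.ne' ht.ne'] at hround
    rw [hS', hSt']
    linarith [min_le_left (log t) M]
  · have hSt' : clampLog L (S + t) = max 0 L := by rw [clampLog, min_eq_right hSt.le]
    have hS' : clampLog L S ≤ max 0 L - L + log S :=
      max_le (by linarith [le_max_right 0 L])
        (by linarith [min_le_left (log S) L, le_max_right 0 L])
    linarith [min_le_right (log t) M]

lemma sum_logCoverLength_le {α μ M : ℝ} (hα : 1 < α) (hμ : 0 < μ) (hμα : μ ≤ searchConst α)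
    (hM : 0 ≤ M) {t : ℕ → ℝ} (ht : ∀ i, 0 < t i) (K : ℕ) :
    ∑ i ∈ range K, logCoverLength μ M (∑ j ∈ range i, t j) (t i) ≤
      α * (M + log (searchConst α)) := by
  set L := M + log (searchConst α)
  have hL : M ≤ L := le_add_of_nonneg_right (log_nonneg (by linarith [le_searchConst hα]))
  have hμL : M + log μ ≤ L := add_le_add_right (log_le_log hμ hμα) M
  set ψ : ℕ → ℝ := fun i => clampLog L (∑ j ∈ range i, t j)
  calc ∑ i ∈ range K, logCoverLength μ M (∑ j ∈ range i, t j) (t i)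
      ≤ ∑ i ∈ range K, α * (ψ (i + 1) - ψ i) := by
        refine sum_le_sum fun i _ => ?_
        simp only [ψ, sum_range_succ]
        exact logCoverLength_le_mul_clampLog_sub hα hμ hμα hL hμL
          (sum_nonneg fun j _ => (ht j).le) (ht i)
    _ = α * (ψ K - ψ 0) := by rw [← mul_sum, sum_range_sub]
    _ ≤ α * L := by
        have hψ0 : ψ 0 = 0 := by simp [ψ, clampLog]
        have hψK : ψ K ≤ L := max_le (by linarith) (min_le_right _ _)
        gcongr
        linarith

lemma mul_measure_le_sum_measure_of_le_card {Ω ι : Type*} [MeasurableSpace Ω] (ν : Measure Ω)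
    {A : Set Ω} (F : Finset ι) {s : ι → Set Ω} [∀ p, DecidablePred (· ∈ s p)]
    (hs : ∀ p ∈ F, MeasurableSet (s p)) {q : ℕ} (hq : ∀ u ∈ A, q ≤ #{p ∈ F | u ∈ s p}) :
    q * ν A ≤ ∑ p ∈ F, ν (s p) := by
  have hmeas : Measurable fun u => ∑ p ∈ F, (s p).indicator (1 : Ω → ENNReal) u :=
    Finset.measurable_sum F fun p hp => measurable_one.indicator (hs p hp)
  calc (q : ENNReal) * ν A = ∫⁻ _ in A, (q : ENNReal) ∂ν := (setLIntegral_const A _).symm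
    _ ≤ ∫⁻ u in A, ∑ p ∈ F, (s p).indicator (1 : Ω → ENNReal) u ∂ν := by
        refine setLIntegral_mono hmeas fun u hu => ?_
        simp only [Set.indicator_apply, Pi.one_apply, sum_boole]
        exact_mod_cast hq u hu
    _ = ∑ p ∈ F, ν.restrict A (s p) := by
        rw [lintegral_finsetSum' _ fun p hp => (measurable_one.indicator (hs p hp)).aemeasurable]
        exact sum_congr rfl fun p hp => lintegral_indicator_one (hs p hp)
    _ ≤ ∑ p ∈ F, ν (s p) := sum_le_sum fun p _ => Measure.restrict_apply_le _ _

lemma mul_le_sum_of_le_card_mem_Icc {ι : Type*} (F : Finset ι) (a b : ι → ℝ) {q : ℕ} {M : ℝ}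
    (hq : ∀ u ∈ Set.Icc 0 M, q ≤ #{p ∈ F | u ∈ Set.Icc (a p) (b p)}) :
    q * M ≤ ∑ p ∈ F, max (b p - a p) 0 := by
  have h := mul_measure_le_sum_measure_of_le_card volume F (fun _ _ => measurableSet_Icc) hq
  simp only [Real.volume_Icc, sub_zero] at h
  rw [← ENNReal.ofReal_natCast, ← ENNReal.ofReal_mul (Nat.cast_nonneg _)] at h
  have hsum : ∑ p ∈ F, ENNReal.ofReal (b p - a p) =
      ENNReal.ofReal (∑ p ∈ F, max (b p - a p) 0) := by
    rw [ENNReal.ofReal_sum_of_nonneg fun p _ => le_max_right _ _]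
    simp
  rw [hsum] at h
  exact (ENNReal.ofReal_le_ofReal_iff (sum_nonneg fun p _ => le_max_right _ _)).mp h

lemma natCast_le_sum_range {t : ℕ → ℝ} (ht : ∀ j, 1 ≤ t j) (i : ℕ) :
    (i : ℝ) ≤ ∑ j ∈ range i, t j := by
  simpa using card_nsmul_le_sum (range i) t 1 fun j _ => ht j

lemma log_mem_Icc_of_covers {μ N S t x : ℝ} (hμ : 0 < μ) (hS : 0 ≤ S) (hx : 1 ≤ x) (hxN : x ≤ N)
    (hxt : x ≤ t) (hSx : S ≤ μ * x) :
    log x ∈ Set.Icc (max 0 (log (S / μ))) (min (log t) (log N)) := by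
  have hx0 : 0 < x := by linarith
  refine ⟨max_le (log_nonneg hx) ?_, le_min (log_le_log hx0 hxt) (log_le_log hx0 hxN)⟩
  rcases hS.eq_or_lt with rfl | hS
  · simpa using log_nonneg hx
  · exact log_le_log (div_pos hS hμ) ((div_le_iff₀' hμ).mpr hSx)

lemma mul_log_le_sum_logCoverLength {k q : ℕ} {μ N : ℝ} (hμ : 0 < μ) (hN : 0 < N)
    (t : Fin k → ℕ → ℝ) (ht : ∀ r i, 1 ≤ t r i)
    (hcov : ∀ x : ℝ, 1 ≤ x → x ≤ N →
      q ≤ {p : Fin k × ℕ | x ≤ t p.1 p.2 ∧ (∑ j ∈ range p.2, t p.1 j) ≤ μ * x}.ncard) :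
    q * log N ≤ ∑ r, ∑ i ∈ range (⌈μ * N⌉₊ + 1),
      logCoverLength μ (log N) (∑ j ∈ range i, t r j) (t r i) := by
  rw [← sum_product']
  refine mul_le_sum_of_le_card_mem_Icc _
    (fun p : Fin k × ℕ => max 0 (log ((∑ j ∈ range p.2, t p.1 j) / μ)))
    (fun p : Fin k × ℕ => min (log (t p.1 p.2)) (log N)) fun u hu => ?_
  obtain ⟨x, hx1, hxN, rfl⟩ : ∃ x, 1 ≤ x ∧ x ≤ N ∧ log x = u :=
    ⟨exp u, one_le_exp hu.1, (exp_le_exp.mpr hu.2).trans_eq (exp_log hN), log_exp u⟩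
  calc q ≤ _ := hcov x hx1 hxN
    _ ≤ Set.ncard (SetLike.coe _) := Set.ncard_le_ncard ?_ (Finset.finite_toSet _)
    _ = _ := Set.ncard_coe_finset _
  rintro ⟨r, i⟩ ⟨hxt, hSx⟩
  have hS : 0 ≤ ∑ j ∈ range i, t r j := sum_nonneg fun j _ => zero_le_one.trans (ht r j)
  have hi : (i : ℝ) ≤ μ * N :=
    (natCast_le_sum_range (ht r) i).trans (hSx.trans (by gcongr))
  simp only [coe_filter, mem_product, mem_univ, mem_range, true_and, Set.mem_ofPred_eq]
  exact ⟨Nat.lt_succ_of_le (Nat.cast_le.mp (hi.trans (Nat.le_ceil _))),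
    log_mem_Icc_of_covers hμ hS hx1 hxN hxt hSx⟩

theorem searchConst_lt_of_cover {k q : ℕ} {α μ N : ℝ} (hα : 1 < α) (hμ : 0 < μ) (hN : 1 ≤ N)
    (hNα : k * α * log (searchConst α) < (q - k * α) * log N)
    (t : Fin k → ℕ → ℝ) (ht : ∀ r i, 1 ≤ t r i)
    (hcov : ∀ x : ℝ, 1 ≤ x → x ≤ N →
      q ≤ {p : Fin k × ℕ | x ≤ t p.1 p.2 ∧ (∑ j ∈ range p.2, t p.1 j) ≤ μ * x}.ncard) :
    searchConst α < μ := by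
  by_contra! hμα
  have hcount := mul_log_le_sum_logCoverLength hμ (by linarith) t ht hcov
  have hrobot : ∀ r, ∑ i ∈ range (⌈μ * N⌉₊ + 1),
      logCoverLength μ (log N) (∑ j ∈ range i, t r j) (t r i) ≤ α * (log N + log (searchConst α)) :=
    fun r => sum_logCoverLength_le hα hμ hμα (log_nonneg hN) (fun i => by linarith [ht r i]) _
  have htotal := hcount.trans (sum_le_sum fun r _ => hrobot r)
  rw [sum_const, card_univ, Fintype.card_fin, nsmul_eq_mul] at htotal
  linarith

/-- Finite-window lower bound for the ORC setting: for every `ε > 0` there is a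
bound `N ≥ 1`, depending only on `k`, `q`, `ε`, such that any `k` ORC strategies
producing a `q`-fold `λ`-cover of `[1, N]` must satisfy
`λ ≥ 2 (q^q/((q-k)^(q-k) k^k))^(1/k) + 1 - ε`. -/
theorem orc_cover_lower_bound_finite_window
    (k q : ℕ) (hk : 1 ≤ k) (hkq : k < q) (ε : ℝ) (hε : 0 < ε) :
    ∃ N : ℝ, 1 ≤ N ∧
      ∀ (lam : ℝ), 1 < lam →
        ∀ t : Fin k → ℕ → ℝ, (∀ r i, 1 ≤ t r i) →
          (∀ x : ℝ, 1 ≤ x → x ≤ N →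
            q ≤ {p : Fin k × ℕ | x ≤ t p.1 p.2 ∧
                  (∑ j ∈ Finset.range p.2, t p.1 j) ≤ ((lam - 1) / 2) * x}.ncard) →
          2 * ((q : ℝ) ^ q / (((q - k : ℕ) : ℝ) ^ (q - k) * (k : ℝ) ^ k)) ^ ((1 : ℝ) / k)
            + 1 - ε ≤ lam := by
  have hk0 : (0 : ℝ) < k := by exact_mod_cast hk
  have hqk : 1 < (q : ℝ) / k := (one_lt_div hk0).mpr (by exact_mod_cast hkq)
  have hnear : ∀ᶠ α in 𝓝[<] ((q : ℝ) / k), searchConst ((q : ℝ) / k) - ε / 2 < searchConst α :=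
    nhdsWithin_le_nhds ((continuousAt_searchConst hqk).eventually (lt_mem_nhds (by linarith)))
  have hIoo : ∀ᶠ α in 𝓝[<] ((q : ℝ) / k), α ∈ Set.Ioo 1 ((q : ℝ) / k) := Ioo_mem_nhdsLT hqk
  obtain ⟨α, ⟨hα, hαq⟩, hαε⟩ := (hIoo.and hnear).exists
  have hgap : 0 < (q : ℝ) - k * α := by
    have := mul_lt_mul_of_pos_left hαq hk0
    rw [mul_div_cancel₀ _ hk0.ne'] at this
    linarith
  have hlogm : 0 ≤ log (searchConst α) := log_nonneg (by linarith [le_searchConst hα])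
  set M := (k * α * log (searchConst α) + 1) / (q - k * α)
  refine ⟨exp M, one_le_exp (by positivity), fun lam hlam t ht hcov => ?_⟩
  have hNα : k * α * log (searchConst α) < (q - k * α) * log (exp M) := by
    rw [log_exp, mul_div_cancel₀ _ hgap.ne']; linarith
  have := searchConst_lt_of_cover hα (by linarith) (one_le_exp (by positivity)) hNα t ht hcov
  rw [← searchConst_div_natCast hk hkq]
  linarith
end

section
/- Let k and q be natural numbers with q > k ≥ 1, set λ_0 := 2·(q^q/((q-k)^{q-k} · k^k))^{1/k} + 1. Then for every real λ > λ_0 there exist k ORC strategies t^{(1)}, …, t^{(k)} (sequences of reals ≥ 1) such that every x ≥ 1 is λ-covered in at least q rounds, counted with multiplicity over all robots and rounds. -/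
/-!
Let `α = (q/(q-k))^(1/k)` and let robot `r` turn at `α^(k i + r)` in round `i`, so that the
rounds of all robots together turn at `α^n`, `n = 0, 1, 2, …`, each exactly once. Before the
round with turning point `α^n`, the robot has travelled a geometric sum of at most
`α^n / (α^k - 1)`. If `m` is least with `x ≤ α^m`, then `α^m ≤ α x`, so each of the `q` rounds
`n = m, …, m + q - 1` covers `x` as soon as `α^q / (α^k - 1) ≤ μ`; and for this choice of `α`
the ratio `α^q / (α^k - 1)` equals `(q^q/((q-k)^(q-k) k^k))^(1/k)`.
-/

open Finset

def coveredRounds {ι : Type*} (t : ι → ℕ → ℝ) (μ x : ℝ) : Set (ι × ℕ) :=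
  {p | x ≤ t p.1 p.2 ∧ ∑ j ∈ range p.2, t p.1 j ≤ μ * x}

theorem finite_coveredRounds {ι : Type*} [Finite ι] {t : ι → ℕ → ℝ}
    (ht : ∀ r i, 1 ≤ t r i) (μ x : ℝ) : (coveredRounds t μ x).Finite := by
  refine (Set.finite_univ.prod (Set.finite_Iic ⌊μ * x⌋₊)).subset fun p hp => ⟨trivial, ?_⟩
  have hround : (p.2 : ℝ) ≤ ∑ j ∈ range p.2, t p.1 j := by
    simpa using card_nsmul_le_sum (range p.2) (t p.1) 1 fun j _ => ht p.1 j
  exact Nat.le_floor (hround.trans hp.2)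

def expStrategy (α : ℝ) (k : ℕ) (r : Fin k) (i : ℕ) : ℝ :=
  α ^ (k * i + r)

section ExpStrategy

variable {α : ℝ}

theorem exists_pow_mem_Icc (hα : 1 < α) {x : ℝ} (hx : 1 ≤ x) :
    ∃ m : ℕ, x ≤ α ^ m ∧ α ^ m ≤ α * x := by
  obtain ⟨n, hn, hxn⟩ := exists_nat_pow_near hx hα
  exact ⟨n + 1, hxn.le, by rw [pow_succ']; gcongr⟩

theorem geom_sum_le_pow_div_sub_one {β : ℝ} (hβ : 1 < β) (i : ℕ) :
    ∑ j ∈ range i, β ^ j ≤ β ^ i / (β - 1) := by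
  rw [geom_sum_eq hβ.ne']
  gcongr
  linarith

theorem sum_expStrategy_le (hα : 1 < α) {k : ℕ} (hk : 0 < k) (r : Fin k) (i : ℕ) :
    ∑ j ∈ range i, expStrategy α k r j ≤ expStrategy α k r i / (α ^ k - 1) := by
  have hαk : 1 < α ^ k := one_lt_pow₀ hα hk.ne'
  calc ∑ j ∈ range i, expStrategy α k r j = (∑ j ∈ range i, (α ^ k) ^ j) * α ^ (r : ℕ) := by
        simp only [expStrategy, sum_mul, pow_add, pow_mul]
    _ ≤ (α ^ k) ^ i / (α ^ k - 1) * α ^ (r : ℕ) := by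
        gcongr
        exact geom_sum_le_pow_div_sub_one hαk i
    _ = expStrategy α k r i / (α ^ k - 1) := by
        rw [expStrategy, pow_add, pow_mul]; ring

def mergedRound {k : ℕ} (hk : 0 < k) (n : ℕ) : Fin k × ℕ :=
  (⟨n % k, Nat.mod_lt n hk⟩, n / k)

theorem expStrategy_mergedRound {k : ℕ} (hk : 0 < k) (n : ℕ) :
    expStrategy α k (mergedRound hk n).1 (mergedRound hk n).2 = α ^ n := by
  rw [expStrategy, mergedRound, Nat.div_add_mod]

theorem mergedRound_injective {k : ℕ} (hk : 0 < k) : Function.Injective (mergedRound hk) := by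
  intro a b h
  rw [← Nat.div_add_mod a k, ← Nat.div_add_mod b k]
  simp only [mergedRound, Prod.mk.injEq, Fin.mk.injEq] at h
  rw [h.1, h.2]

theorem le_ncard_coveredRounds_expStrategy (hα : 1 < α) {k q : ℕ} (hk : 0 < k) {μ : ℝ}
    (hμ : α ^ q / (α ^ k - 1) ≤ μ) {x : ℝ} (hx : 1 ≤ x) :
    q ≤ (coveredRounds (expStrategy α k) μ x).ncard := by
  have hαk : 0 < α ^ k - 1 := sub_pos.2 (one_lt_pow₀ hα hk.ne')
  obtain ⟨m, hxm, hmx⟩ := exists_pow_mem_Icc hα hx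
  have hcovered :
      ∀ n ∈ Set.Ico m (m + q), mergedRound hk n ∈ coveredRounds (expStrategy α k) μ x := by
    rintro n ⟨hmn, hnq⟩
    have hpow : α ^ n ≤ α ^ q * x := by
      refine le_of_mul_le_mul_left ?_ (by linarith : 0 < α)
      calc α * α ^ n = α ^ (n + 1) := (pow_succ' α n).symm
        _ ≤ α ^ (m + q) := pow_le_pow_right₀ hα.le hnq
        _ = α ^ m * α ^ q := pow_add α m q
        _ ≤ α * x * α ^ q := by gcongr
        _ = α * (α ^ q * x) := by ring
    refine ⟨(expStrategy_mergedRound hk n).symm ▸ hxm.trans (pow_le_pow_right₀ hα.le hmn), ?_⟩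
    calc _ ≤ α ^ n / (α ^ k - 1) := by
          simpa only [expStrategy_mergedRound] using
            sum_expStrategy_le hα hk (mergedRound hk n).1 (mergedRound hk n).2
      _ ≤ α ^ q * x / (α ^ k - 1) := by gcongr
      _ = α ^ q / (α ^ k - 1) * x := by ring
      _ ≤ μ * x := by gcongr
  calc q = (Set.Ico m (m + q)).ncard := by simp [Set.ncard_Ico_nat]
    _ ≤ _ := Set.ncard_le_ncard_of_injOn _ hcovered (mergedRound_injective hk).injOn
        (finite_coveredRounds (fun r i => one_le_pow₀ hα.le) μ x)

end ExpStrategy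

theorem pow_div_pow_sub_one_eq {α : ℝ} {k q : ℕ} (hk : 0 < k) (hkq : k < q)
    (hα : α ^ k = q / (q - k : ℕ)) (hα0 : 0 ≤ α) :
    α ^ q / (α ^ k - 1) =
      ((q : ℝ) ^ q / (((q - k : ℕ) : ℝ) ^ (q - k) * (k : ℝ) ^ k)) ^ ((1 : ℝ) / k) := by
  obtain ⟨d, rfl⟩ : ∃ d, q = k + d := ⟨q - k, by omega⟩
  have hd : (0 : ℝ) < d := by exact_mod_cast (by omega : 0 < d)
  simp only [Nat.add_sub_cancel_left] at hα ⊢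
  have hαk : α ^ k - 1 = k / d := by
    rw [hα]; push_cast; field_simp; ring
  rw [hαk, one_div, ← Real.pow_rpow_inv_natCast (by positivity : 0 ≤ α ^ (k + d) / (k / d)) hk.ne']
  congr 1
  rw [div_pow, div_pow, ← pow_mul, mul_comm (k + d), pow_mul, hα, div_pow, pow_add (d : ℝ)]
  field_simp

/-- Upper bound in the ORC setting: for every `λ` strictly larger than
`λ₀ = 2 (q^q/((q-k)^(q-k) k^k))^(1/k) + 1` there exist `k` ORC strategies
producing a `q`-fold `λ`-cover of `[1,∞)`. -/
theorem orc_cover_upper_bound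
    (k q : ℕ) (hk : 1 ≤ k) (hkq : k < q)
    (lam : ℝ)
    (hlam : 2 * ((q : ℝ) ^ q / (((q - k : ℕ) : ℝ) ^ (q - k) * (k : ℝ) ^ k)) ^ ((1 : ℝ) / k)
        + 1 < lam) :
    ∃ t : Fin k → ℕ → ℝ,
      (∀ r i, 1 ≤ t r i) ∧
      ∀ x : ℝ, 1 ≤ x →
        q ≤ {p : Fin k × ℕ | x ≤ t p.1 p.2 ∧
              (∑ j ∈ Finset.range p.2, t p.1 j) ≤ ((lam - 1) / 2) * x}.ncard := by
  set α : ℝ := ((q : ℝ) / (q - k : ℕ)) ^ ((k : ℝ)⁻¹)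
  have hα0 : 0 ≤ α := by positivity
  have hαk : α ^ k = q / (q - k : ℕ) := Real.rpow_inv_natCast_pow (by positivity) (by omega)
  have hα : 1 < α := by
    refine (one_lt_pow_iff_of_nonneg hα0 (by omega : k ≠ 0)).1 ?_
    rw [hαk, one_lt_div (by exact_mod_cast (by omega : 0 < q - k))]
    exact_mod_cast (by omega : q - k < q)
  refine ⟨expStrategy α k, fun r i => one_le_pow₀ hα.le, fun x hx => ?_⟩
  refine le_ncard_coveredRounds_expStrategy hα (by omega) ?_ hx
  rw [pow_div_pow_sub_one_eq (by omega) hkq hαk hα0]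
  linarith
end

section
/- Let s and k be positive natural numbers and let μ* > 0 be a real number. Then for every real x with 0 < x < μ*, one has (μ*)^s / (x^s · (μ* − x)^k) ≥ (k+s)^{k+s} / (s^s · k^k · (μ*)^k). -/
/-- For `0 < x < μ*`, one has `μ*^s/(x^s (μ*-x)^k) ≥ (k+s)^(k+s)/(s^s k^k μ*^k)`. -/
theorem ratio_lower_bound
    (s k : ℕ) (hs : 0 < s) (hk : 0 < k)
    (μstar : ℝ) (hμ : 0 < μstar)
    (x : ℝ) (hx0 : 0 < x) (hxμ : x < μstar) :
    ((k + s : ℕ) : ℝ) ^ (k + s) / ((s : ℝ) ^ s * (k : ℝ) ^ k * μstar ^ k)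
      ≤ μstar ^ s / (x ^ s * (μstar - x) ^ k) := by
  have hy : (0:ℝ) < μstar - x := by linarith
  have hns : (0:ℝ) < (s:ℝ) := by exact_mod_cast hs
  have hnk : (0:ℝ) < (k:ℝ) := by exact_mod_cast hk
  have hn : (0:ℝ) < (k:ℝ) + s := by linarith
  set n : ℝ := (k:ℝ) + s with hn_def
  have hw : (s:ℝ)/n + (k:ℝ)/n = 1 := by field_simp; rw [hn_def]; ring
  have hp₁ : (0:ℝ) ≤ x * n / s := by positivity
  have hp₂ : (0:ℝ) ≤ (μstar - x) * n / k := by positivity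
  have h := Real.geom_mean_le_arith_mean2_weighted
    (by positivity) (by positivity) hp₁ hp₂ hw
  have hsum : (s:ℝ)/n * (x * n / s) + (k:ℝ)/n * ((μstar - x) * n / k) = μstar := by
    field_simp; ring
  rw [hsum] at h
  -- raise both sides to power n
  have h2 : (x * n / s) ^ (s:ℕ) * ((μstar - x) * n / k) ^ (k:ℕ) ≤ μstar ^ (k + s) := by
    have := Real.rpow_le_rpow (by positivity) h (le_of_lt hn)
    rw [Real.mul_rpow (by positivity) (by positivity),
      ← Real.rpow_mul hp₁, ← Real.rpow_mul hp₂] at this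
    have e1 : (s:ℝ)/n * n = ((s:ℕ):ℝ) := by field_simp
    have e2 : (k:ℝ)/n * n = ((k:ℕ):ℝ) := by field_simp
    rw [e1, e2, Real.rpow_natCast, Real.rpow_natCast] at this
    calc (x * n / s) ^ (s:ℕ) * ((μstar - x) * n / k) ^ (k:ℕ) ≤ μstar ^ n := this
      _ = μstar ^ (k + s) := by
          rw [← Real.rpow_natCast μstar (k+s)]; norm_num [hn_def]
  have key : x ^ s * (μstar - x) ^ k * n ^ (k + s) ≤ μstar ^ (k+s) * ((s:ℝ)^s * (k:ℝ)^k) := by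
    have expand : (x * n / s) ^ (s:ℕ) * ((μstar - x) * n / k) ^ (k:ℕ)
        = x ^ s * (μstar - x) ^ k * n ^ (k + s) / ((s:ℝ)^s * (k:ℝ)^k) := by
      rw [div_pow, div_pow, mul_pow, mul_pow]
      rw [div_mul_div_comm, pow_add]
      ring_nf
    rw [expand, div_le_iff₀ (by positivity)] at h2
    linarith [h2]
  rw [div_le_div_iff₀ (by positivity) (by positivity)]
  have hcast : ((k + s : ℕ) : ℝ) = n := by push_cast [hn_def]; ring
  rw [hcast]
  calc n ^ (k+s) * (x ^ s * (μstar - x) ^ k)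
      = x ^ s * (μstar - x) ^ k * n ^ (k + s) := by ring
    _ ≤ μstar ^ (k+s) * ((s:ℝ)^s * (k:ℝ)^k) := key
    _ = μstar ^ s * ((s:ℝ)^s * (k:ℝ)^k * μstar ^ k) := by rw [pow_add]; ring
end

section
/- Let s and k be positive natural numbers and let μ > 0 be a real number with μ < ((k+s)^{k+s}/(s^s · k^k))^{1/k}. Set δ := (k+s)^{k+s}/(s^s · k^k · μ^k). Then δ > 1, and for every real μ* with 0 < μ* ≤ μ and every real x with 0 < x < μ*, one has (μ*)^s / (x^s · (μ* − x)^k) ≥ δ. -/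
/-!
Weighted AM-GM for `x / s` and `(μ* - x) / k` with weights `s / (k + s)` and `k / (k + s)` gives
`(k + s)^(k + s) x^s (μ* - x)^k ≤ s^s k^k μ*^(k + s)`, so the ratio is at least
`C / μ*^k ≥ C / μ^k = δ` with `C = (k + s)^(k + s) / (s^s k^k)`; and `δ > 1` is just `μ^k < C`.
-/

theorem pow_mul_pow_le_weighted_mean_pow {s k : ℕ} (hsk : 0 < s + k) {a b : ℝ}
    (ha : 0 ≤ a) (hb : 0 ≤ b) :
    a ^ s * b ^ k ≤ ((s * a + k * b) / (s + k)) ^ (s + k) := by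
  have hN : (0 : ℝ) < s + k := by exact_mod_cast hsk
  have amgm := Real.geom_mean_le_arith_mean2_weighted (w₁ := s / (s + k)) (w₂ := k / (s + k))
    (by positivity) (by positivity) ha hb (by field_simp)
  have hpow : (a ^ ((s : ℝ) / (s + k)) * b ^ ((k : ℝ) / (s + k))) ^ (s + k) = a ^ s * b ^ k := by
    rw [mul_pow, ← Real.rpow_mul_natCast ha, ← Real.rpow_mul_natCast hb]
    push_cast
    rw [div_mul_cancel₀ _ hN.ne', div_mul_cancel₀ _ hN.ne', Real.rpow_natCast, Real.rpow_natCast]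
  calc a ^ s * b ^ k
      = (a ^ ((s : ℝ) / (s + k)) * b ^ ((k : ℝ) / (s + k))) ^ (s + k) := hpow.symm
    _ ≤ ((s * a + k * b) / (s + k)) ^ (s + k) := by
      gcongr
      exact amgm.trans_eq (by ring)

theorem pow_mul_pow_mul_add_pow_le {s k : ℕ} (hs : 0 < s) (hk : 0 < k) {a b : ℝ}
    (ha : 0 ≤ a) (hb : 0 ≤ b) :
    ((s + k : ℕ) : ℝ) ^ (s + k) * (a ^ s * b ^ k) ≤ s ^ s * k ^ k * (a + b) ^ (s + k) := by
  have hsR : (0 : ℝ) < s := by exact_mod_cast hs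
  have hkR : (0 : ℝ) < k := by exact_mod_cast hk
  have h := pow_mul_pow_le_weighted_mean_pow (by omega : 0 < s + k)
    (div_nonneg ha hsR.le) (div_nonneg hb hkR.le)
  rw [mul_div_cancel₀ _ hsR.ne', mul_div_cancel₀ _ hkR.ne', div_pow, div_pow, div_pow,
    div_mul_div_comm, div_le_div_iff₀ (by positivity) (by positivity)] at h
  push_cast
  linarith

/-- If `μ < ((k+s)^(k+s)/(s^s k^k))^(1/k)` and `δ := (k+s)^(k+s)/(s^s k^k μ^k)`,
then `δ > 1` and `μ*^s/(x^s (μ*-x)^k) ≥ δ` for all `0 < μ* ≤ μ` and `0 < x < μ*`. -/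
theorem ratio_uniform_lower_bound
    (s k : ℕ) (hs : 0 < s) (hk : 0 < k)
    (μ : ℝ) (hμ0 : 0 < μ)
    (hμ : μ < (((k + s : ℕ) : ℝ) ^ (k + s) / ((s : ℝ) ^ s * (k : ℝ) ^ k)) ^ ((1 : ℝ) / k))
    (δ : ℝ) (hδ : δ = ((k + s : ℕ) : ℝ) ^ (k + s) / ((s : ℝ) ^ s * (k : ℝ) ^ k * μ ^ k)) :
    1 < δ ∧
      ∀ μstar : ℝ, 0 < μstar → μstar ≤ μ →
        ∀ x : ℝ, 0 < x → x < μstar →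
          δ ≤ μstar ^ s / (x ^ s * (μstar - x) ^ k) := by
  set C : ℝ := ((k + s : ℕ) : ℝ) ^ (k + s) / ((s : ℝ) ^ s * (k : ℝ) ^ k) with hC
  have hδC : δ = C / μ ^ k := by rw [hδ, div_div]
  have hμk : μ ^ k < C := by
    rw [one_div, Real.lt_rpow_inv_iff_of_pos hμ0.le (by positivity) (by positivity),
      Real.rpow_natCast] at hμ
    exact hμ
  refine ⟨hδC ▸ (one_lt_div (by positivity)).2 hμk, fun m hm hmμ x hx hxm => ?_⟩
  have hmx : 0 < m - x := sub_pos.2 hxm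
  have key : C * (x ^ s * (m - x) ^ k) ≤ m ^ s * m ^ k := by
    have := pow_mul_pow_mul_add_pow_le hs hk hx.le hmx.le
    rw [add_sub_cancel, add_comm s k] at this
    rw [← pow_add, add_comm s k, hC, div_mul_eq_mul_div, div_le_iff₀ (by positivity)]
    linarith
  calc δ = C / μ ^ k := hδC
    _ ≤ C / m ^ k := by gcongr
    _ ≤ m ^ s / (x ^ s * (m - x) ^ k) := by
      rw [div_le_div_iff₀ (by positivity) (by positivity)]
      exact key
end

section
/- For natural numbers q > k > 1, define μ(q,k) := (q^q/((q−k)^{q−k} · k^k))^{1/k}. Then μ(q,k) < μ(q−1,k−1). Equivalently, the function ρ ↦ ρ^ρ/(ρ−1)^{ρ−1} is strictly increasing on (1, ∞) and μ(q,k) equals this function evaluated at ρ = q/k, with q/k < (q−1)/(k−1). -/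
/-!
Taking logarithms, `ρ ↦ ρ^ρ / (ρ-1)^(ρ-1)` becomes `ρ log ρ - (ρ-1) log (ρ-1)`, whose derivative
`log ρ - log (ρ-1)` is positive, so it is strictly increasing on `(1, ∞)`. Since
`k^q = k^(q-k) k^k`, the quantity `μ(q,k)^k` is `(q/k)^q / (q/k - 1)^(q-k)`, so `μ(q,k)` is this
function at `ρ = q/k`; finally `q/k < (q-1)/(k-1)` because `k < q`.
-/

/-- `μ(q,k) := (q^q/((q-k)^(q-k) k^k))^(1/k)`. -/
noncomputable def muQK (q k : ℕ) : ℝ :=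
  ((q : ℝ) ^ q / (((q - k : ℕ) : ℝ) ^ (q - k) * (k : ℝ) ^ k)) ^ ((1 : ℝ) / k)

open Real

lemma strictMonoOn_mul_log_sub_mul_log_sub_one :
    StrictMonoOn (fun ρ : ℝ => ρ * log ρ - (ρ - 1) * log (ρ - 1)) (Set.Ioi 1) := by
  have hcont : Continuous fun ρ : ℝ => ρ * log ρ - (ρ - 1) * log (ρ - 1) :=
    continuous_mul_log.sub (continuous_mul_log.comp (continuous_sub_right 1))
  refine strictMonoOn_of_hasDerivWithinAt_pos (convex_Ioi 1) hcont.continuousOn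
    (f' := fun ρ => log ρ - log (ρ - 1)) (fun ρ hρ => ?_) (fun ρ hρ => ?_)
  · rw [interior_Ioi] at hρ
    have hsub : HasDerivAt (fun ρ : ℝ => ρ - 1) 1 ρ := (hasDerivAt_id ρ).sub_const 1
    have := (hasDerivAt_mul_log (by linarith [hρ.out] : ρ ≠ 0)).sub
      (((hasDerivAt_mul_log (by linarith [hρ.out] : ρ - 1 ≠ 0)).comp ρ hsub).congr_deriv
        (mul_one _))
    exact (this.congr_deriv (by ring)).hasDerivWithinAt
  · rw [interior_Ioi] at hρ
    exact sub_pos.2 (log_lt_log (by linarith [hρ.out]) (by linarith))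

lemma rpow_self_div_rpow_self_eq_exp {ρ : ℝ} (hρ : 1 < ρ) :
    ρ ^ ρ / (ρ - 1) ^ (ρ - 1) = exp (ρ * log ρ - (ρ - 1) * log (ρ - 1)) := by
  rw [rpow_def_of_pos (by linarith), rpow_def_of_pos (by linarith), ← exp_sub, mul_comm ρ,
    mul_comm (ρ - 1)]

lemma strictMonoOn_rpow_self_div_rpow_self_sub_one :
    StrictMonoOn (fun ρ : ℝ => ρ ^ ρ / (ρ - 1) ^ (ρ - 1)) (Set.Ioi 1) := by
  intro x hx y hy hxy
  simp only [rpow_self_div_rpow_self_eq_exp hx.out, rpow_self_div_rpow_self_eq_exp hy.out]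
  exact exp_lt_exp.2 (strictMonoOn_mul_log_sub_mul_log_sub_one hx hy hxy)

lemma div_lt_sub_one_div_sub_one {a b : ℝ} (hb : 1 < b) (hba : b < a) :
    a / b < (a - 1) / (b - 1) := by
  rw [div_lt_div_iff₀ (by linarith) (by linarith)]
  linarith

lemma pow_rpow_one_div_natCast {x : ℝ} (hx : 0 ≤ x) (n k : ℕ) :
    (x ^ n) ^ ((1 : ℝ) / k) = x ^ ((n : ℝ) / k) := by
  rw [← rpow_natCast, ← rpow_mul hx, mul_one_div]

lemma muQK_eq (q k : ℕ) (hk : 0 < k) (hkq : k ≤ q) :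
    muQK q k = ((q : ℝ) / k) ^ ((q : ℝ) / k) / ((q : ℝ) / k - 1) ^ ((q : ℝ) / k - 1) := by
  obtain ⟨m, rfl⟩ : ∃ m, q = m + k := ⟨q - k, by omega⟩
  have hρ : ((m + k : ℕ) : ℝ) / k - 1 = m / k := by push_cast; field_simp; ring
  have hhomog : ((m + k : ℕ) : ℝ) ^ (m + k) / ((m : ℝ) ^ m * (k : ℝ) ^ k)
      = (((m + k : ℕ) : ℝ) / k) ^ (m + k) / ((m : ℝ) / k) ^ m := by
    rw [div_pow, div_pow, pow_add (k : ℝ)]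
    field_simp
  rw [muQK, Nat.add_sub_cancel, hhomog, div_rpow (by positivity) (by positivity),
    pow_rpow_one_div_natCast (by positivity), pow_rpow_one_div_natCast (by positivity), hρ]

/-- For `q > k > 1`, `μ(q,k) < μ(q-1,k-1)`.  Equivalently, `ρ ↦ ρ^ρ/(ρ-1)^(ρ-1)`
is strictly increasing on `(1,∞)`, `μ(q,k)` equals this function at `ρ = q/k`,
and `q/k < (q-1)/(k-1)`. -/
theorem muQK_strict_decrease
    (q k : ℕ) (hk : 1 < k) (hkq : k < q) :
    muQK q k < muQK (q - 1) (k - 1) ∧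
    StrictMonoOn (fun ρ : ℝ => ρ ^ ρ / (ρ - 1) ^ (ρ - 1)) (Set.Ioi (1 : ℝ)) ∧
    muQK q k = ((q : ℝ) / k) ^ ((q : ℝ) / k) / ((q : ℝ) / k - 1) ^ ((q : ℝ) / k - 1) ∧
    (q : ℝ) / k < ((q - 1 : ℕ) : ℝ) / ((k - 1 : ℕ) : ℝ) := by
  have hkqR : (k : ℝ) < q := by exact_mod_cast hkq
  have hρ : 1 < (q : ℝ) / k := (one_lt_div (Nat.cast_pos.2 (by omega))).2 hkqR
  have hρ' : 1 < ((q - 1 : ℕ) : ℝ) / ((k - 1 : ℕ) : ℝ) :=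
    (one_lt_div (Nat.cast_pos.2 (by omega))).2 (by exact_mod_cast (by omega : k - 1 < q - 1))
  have hlt : (q : ℝ) / k < ((q - 1 : ℕ) : ℝ) / ((k - 1 : ℕ) : ℝ) := by
    rw [Nat.cast_sub (by omega : 1 ≤ q), Nat.cast_sub hk.le, Nat.cast_one]
    exact div_lt_sub_one_div_sub_one (by exact_mod_cast hk) hkqR
  refine ⟨?_, strictMonoOn_rpow_self_div_rpow_self_sub_one, muQK_eq q k (by omega) hkq.le, hlt⟩
  rw [muQK_eq q k (by omega) hkq.le, muQK_eq (q - 1) (k - 1) (by omega) (by omega)]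
  exact strictMonoOn_rpow_self_div_rpow_self_sub_one hρ hρ' hlt
end

section
/- Let m, k, f be natural numbers with k ≥ 1, m ≥ 1, and set q := m(f+1). Let λ > 1 and for each r ∈ {1,…,k} let σ^{(r)} : ℕ → {1,…,m} × ℝ be a round strategy on m rays with all turning distances ≥ 1. Suppose that for every ray i and every x ≥ 1, at least f+1 of the k robots λ-cover the point at distance x on ray i. Then the k sequences of turning distances t^{(r)}_j := (σ^{(r)}_j).2 form a q-fold λ-cover of ℝ_{≥1} in the ORC setting; that is, for every x ≥ 1 the total number of pairs (r, j) with x ≤ t^{(r)}_j and ((λ−1)/2)·x ≥ t^{(r)}_1 + ⋯ + t^{(r)}_{j−1} is at least q. -/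
/-! A robot that `λ`-covers the point `x` on ray `i` does so in some round `j` on ray `i`, and
`(r, j)` is then an ORC cover of `x`; rounds on different rays are different pairs, so the
`m` rays yield `m (f + 1)` distinct pairs. Since every turning distance is at least `1`, the
round index of a covering pair is bounded by the budget `((λ - 1) / 2) x`, so only finitely
many pairs are counted. -/

theorem Set.Finite.setOf_sum_range_le {ι : Type*} [Finite ι] {t : ι → ℕ → ℝ}
    (ht : ∀ r j, 1 ≤ t r j) (T : ℝ) :
    {p : ι × ℕ | ∑ l ∈ Finset.range p.2, t p.1 l ≤ T}.Finite := by
  refine ((Set.finite_univ (α := ι)).prod (Set.finite_Iic ⌊T⌋₊)).subset ?_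
  rintro ⟨r, j⟩ hp
  refine ⟨Set.mem_univ r, Nat.le_floor ?_⟩
  calc (j : ℝ) = ∑ _l ∈ Finset.range j, (1 : ℝ) := by simp
    _ ≤ ∑ l ∈ Finset.range j, t r l := Finset.sum_le_sum fun l _ => ht r l
    _ ≤ T := hp

theorem Set.Finite.mul_le_ncard_of_le_ncard_fiber {α β : Type*} [Fintype β] {s : Set α}
    (hs : s.Finite) (g : α → β) {n : ℕ} (hn : ∀ b, n ≤ {a ∈ s | g a = b}.ncard) :
    n * Fintype.card β ≤ s.ncard := by
  classical
  rw [Set.ncard_eq_toFinset_card s hs]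
  refine Finset.mul_card_image_le_card_of_maps_to (fun a _ => Finset.mem_univ (g a)) n
    fun b _ => ?_
  convert hn b using 1
  rw [← Set.ncard_coe_finset, Finset.coe_filter]
  simp only [Set.Finite.mem_toFinset]

theorem m_ray_to_orc_reduction_general
    (m k f : ℕ)
    (lam : ℝ)
    (σ : Fin k → ℕ → Fin m × ℝ)
    (hσ : ∀ r j, 1 ≤ (σ r j).2)
    (hcov : ∀ (i : Fin m) (x : ℝ), 1 ≤ x →
      f + 1 ≤ {r : Fin k | ∃ j : ℕ, (σ r j).1 = i ∧ x ≤ (σ r j).2 ∧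
            (∑ l ∈ Finset.range j, (σ r l).2) ≤ ((lam - 1) / 2) * x}.ncard) :
    ∀ x : ℝ, 1 ≤ x →
      m * (f + 1) ≤ {p : Fin k × ℕ | x ≤ (σ p.1 p.2).2 ∧
            (∑ l ∈ Finset.range p.2, (σ p.1 l).2) ≤ ((lam - 1) / 2) * x}.ncard := by
  intro x hx
  set covering := {p : Fin k × ℕ | x ≤ (σ p.1 p.2).2 ∧
    (∑ l ∈ Finset.range p.2, (σ p.1 l).2) ≤ ((lam - 1) / 2) * x}
  have hfin : covering.Finite :=
    (Set.Finite.setOf_sum_range_le (t := fun r j => (σ r j).2) hσ _).subset fun _ hp => hp.2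
  have hray : ∀ i, f + 1 ≤ {p ∈ covering | (σ p.1 p.2).1 = i}.ncard := by
    intro i
    have hfin_i := hfin.subset (Set.sep_subset covering fun p => (σ p.1 p.2).1 = i)
    have hrobots : {r : Fin k | ∃ j : ℕ, (σ r j).1 = i ∧ x ≤ (σ r j).2 ∧
        (∑ l ∈ Finset.range j, (σ r l).2) ≤ ((lam - 1) / 2) * x} ⊆
        Prod.fst '' {p ∈ covering | (σ p.1 p.2).1 = i} := by
      rintro r ⟨j, hi, hxj, hsum⟩
      exact ⟨(r, j), ⟨⟨hxj, hsum⟩, hi⟩, rfl⟩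
    calc f + 1 ≤ _ := hcov i x hx
      _ ≤ _ := Set.ncard_le_ncard hrobots (hfin_i.image Prod.fst)
      _ ≤ _ := Set.ncard_image_le hfin_i
  calc m * (f + 1) = (f + 1) * Fintype.card (Fin m) := by rw [Fintype.card_fin, mul_comm]
    _ ≤ covering.ncard := hfin.mul_le_ncard_of_le_ncard_fiber _ hray

/-- Reduction from the `m`-ray search problem with crash faults to the
one-ray-cover-with-returns setting: if every point at distance `x ≥ 1` on every
ray is `λ`-covered by at least `f+1` of the `k` robots (round strategies on `m`
rays), then the sequences of turning distances form a `q`-fold `λ`-cover of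
`[1,∞)` in the ORC setting, where `q = m(f+1)`. -/
theorem m_ray_to_orc_reduction
    (m k f : ℕ) (hm : 1 ≤ m) (hk : 1 ≤ k)
    (lam : ℝ) (hlam : 1 < lam)
    (σ : Fin k → ℕ → Fin m × ℝ)
    (hσ : ∀ r j, 1 ≤ (σ r j).2)
    (hcov : ∀ (i : Fin m) (x : ℝ), 1 ≤ x →
      f + 1 ≤ {r : Fin k | ∃ j : ℕ, (σ r j).1 = i ∧ x ≤ (σ r j).2 ∧
            (∑ l ∈ Finset.range j, (σ r l).2) ≤ ((lam - 1) / 2) * x}.ncard) :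
    ∀ x : ℝ, 1 ≤ x →
      m * (f + 1) ≤ {p : Fin k × ℕ | x ≤ (σ p.1 p.2).2 ∧
            (∑ l ∈ Finset.range p.2, (σ p.1 l).2) ≤ ((lam - 1) / 2) * x}.ncard :=
  m_ray_to_orc_reduction_general m k f lam σ hσ hcov
end
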